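/- arXiv:1401.1920 — 9 statements merged into one kernel-verified Lean document; each statement's English description precedes it below -/
import Mathlib

section
/- Let a, b, d be positive integers with 2 ≤ a ≤ d and a ≤ b. The maximum of ∑_{i=1}^{b} x_i over all non-increasing sequences of positive integers x_1 ≥ x_2 ≥ ... ≥ x_b ≥ 1 satisfying ∑_{i=1}^{a-1} x_i ≤ d-1 equals (b - a + 1)·⌊(d-1)/(a-1)⌋ + d - 1. -/
open Finset

lemma sum_ite_lt_aux (q r m : ℕ) (h : r ≤ m) :
    ∑ i ∈ Finset.range m, (if i < r then q + 1 else q) = m * q + r := by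
  induction m with
  | zero =>
    have : r = 0 := by omega
    simp [this]
  | succ n ih =>
    rcases Nat.lt_or_ge n r with hn | hn
    · have hr : r = n + 1 := by omega
      rw [Finset.sum_range_succ, if_pos hn,
        Finset.sum_congr rfl (fun i hi => if_pos (by simp at hi; omega)),
        Finset.sum_const, Finset.card_range, smul_eq_mul, hr]
      ring
    · rw [Finset.sum_range_succ, if_neg (by omega), ih hn]
      ring

theorem stmt0 (a b d : ℕ) (ha : 2 ≤ a) (had : a ≤ d) (hab : a ≤ b) :
    IsGreatest {S : ℕ | ∃ x : ℕ → ℕ,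
        (∀ i, i < b → 1 ≤ x i) ∧ (∀ i j, i ≤ j → j < b → x j ≤ x i) ∧
        (∑ i ∈ Finset.range (a - 1), x i) ≤ d - 1 ∧
        S = ∑ i ∈ Finset.range b, x i}
      ((b - a + 1) * ((d - 1) / (a - 1)) + (d - 1)) := by
  set q := (d - 1) / (a - 1) with hq
  set r := (d - 1) % (a - 1) with hr
  have hn : 0 < a - 1 := by omega
  have hdm : (a - 1) * q + r = d - 1 := Nat.div_add_mod _ _
  have hrlt : r < a - 1 := Nat.mod_lt _ hn
  have hq1 : 1 ≤ q := by
    rw [hq, Nat.one_le_div_iff hn]; omega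
  constructor
  · refine ⟨fun i => if i < r then q + 1 else q, ?_, ?_, ?_, ?_⟩
    · intro i _; dsimp only; split <;> omega
    · intro i j hij _; dsimp only; split <;> split <;> omega
    · rw [sum_ite_lt_aux q r (a - 1) (by omega)]; omega
    · rw [sum_ite_lt_aux q r b (by omega)]
      have : (b - a + 1) + (a - 1) = b := by omega
      calc (b - a + 1) * q + (d - 1) = (b - a + 1) * q + ((a - 1) * q + r) := by omega
        _ = ((b - a + 1) + (a - 1)) * q + r := by ring
        _ = b * q + r := by rw [this]
  · rintro S ⟨x, hpos, hmono, hsum, rfl⟩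
    have hab1 : a - 1 ≤ b := by omega
    have hxq : x (a - 1) ≤ q := by
      rw [hq, Nat.le_div_iff_mul_le hn]
      calc x (a - 1) * (a - 1) = ∑ _i ∈ Finset.range (a - 1), x (a - 1) := by
            simp [mul_comm]
        _ ≤ ∑ i ∈ Finset.range (a - 1), x i := by
            apply Finset.sum_le_sum
            intro i hi
            exact hmono i (a - 1) (by simp at hi; omega) (by omega)
        _ ≤ d - 1 := hsum
    have hsplit : ∑ i ∈ Finset.range b, x i =
        ∑ i ∈ Finset.range (a - 1), x i + ∑ i ∈ Finset.Ico (a - 1) b, x i := by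
      simp only [Finset.range_eq_Ico]
      exact (Finset.sum_Ico_consecutive _ (Nat.zero_le _) hab1).symm
    have htail : ∑ i ∈ Finset.Ico (a - 1) b, x i ≤ (b - (a - 1)) * q := by
      calc ∑ i ∈ Finset.Ico (a - 1) b, x i ≤ ∑ _i ∈ Finset.Ico (a - 1) b, q := by
            apply Finset.sum_le_sum
            intro i hi
            simp only [Finset.mem_Ico] at hi
            exact le_trans (hmono (a - 1) i hi.1 hi.2) hxq
        _ = (b - (a - 1)) * q := by simp [mul_comm]
    have hb : b - (a - 1) = b - a + 1 := by omega
    rw [hb] at htail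
    rw [hsplit]
    omega
end

section
/- If 2 ≤ a ≤ d, a ≤ b, and (a-1) divides (d-1), then the maximum of ∑_{i=1}^{b} x_i over non-increasing sequences of positive integers with ∑_{i=1}^{a-1} x_i ≤ d-1 equals b·(d-1)/(a-1). -/
/-!
Chebyshev's sum inequality, applied to `x` and the indicator of the first `a - 1` indices (both
non-increasing), says that the average of the first `a - 1` terms of a non-increasing sequence is at
least the average of its first `b` terms. Hence `∑ i < b, x i ≤ b (d - 1) / (a - 1)`, and the
constant sequence `(d - 1) / (a - 1)`, a positive integer, attains the bound.
-/

open Finset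

theorem AntitoneOn.natCast_mul_sum_range_le {α : Type*} [Semiring α] [LinearOrder α]
    [IsStrictOrderedRing α] [ExistsAddOfLE α] {x : ℕ → α} {m b : ℕ} (hmb : m ≤ b)
    (hx : AntitoneOn x (Set.Iio b)) :
    (m : α) * ∑ i ∈ range b, x i ≤ b * ∑ i ∈ range m, x i := by
  set g : ℕ → α := fun i ↦ if i < m then 1 else 0
  have hg : Antitone g := fun i j hij ↦ by
    dsimp only [g]
    split_ifs <;> first | omega | simp
  have hfilter : (range b).filter (· < m) = range m := by
    ext i; simp only [mem_filter, mem_range]; omega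
  rw [← coe_range] at hx
  have hchebyshev := (hx.monovaryOn (hg.antitoneOn _)).sum_mul_sum_le_card_mul_sum
  simp only [g, mul_ite, mul_one, mul_zero, ← sum_filter, hfilter, sum_const, card_range,
    nsmul_one] at hchebyshev
  rwa [Nat.cast_comm]

theorem stmt2 (a b d : ℕ) (ha : 2 ≤ a) (had : a ≤ d) (hab : a ≤ b)
    (hdvd : (a - 1) ∣ (d - 1)) :
    IsGreatest {S : ℕ | ∃ x : ℕ → ℕ,
        (∀ i, i < b → 1 ≤ x i) ∧ (∀ i j, i ≤ j → j < b → x j ≤ x i) ∧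
        (∑ i ∈ Finset.range (a - 1), x i) ≤ d - 1 ∧
        S = ∑ i ∈ Finset.range b, x i}
      (b * ((d - 1) / (a - 1))) := by
  obtain ⟨q, hq⟩ := hdvd
  have ha1 : 0 < a - 1 := by omega
  have hq1 : 1 ≤ q := Nat.pos_of_ne_zero fun h ↦ by simp [h] at hq; omega
  rw [hq, Nat.mul_div_cancel_left _ ha1]
  refine ⟨⟨fun _ ↦ q, fun _ _ ↦ hq1, fun _ _ _ _ ↦ le_rfl, by simp [mul_comm], by simp⟩, ?_⟩
  rintro S ⟨x, -, hx, hsum, rfl⟩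
  have hchebyshev := AntitoneOn.natCast_mul_sum_range_le (m := a - 1) (by omega)
    (fun i hi j hj hij ↦ hx i j hij hj)
  refine Nat.le_of_mul_le_mul_left ?_ ha1
  calc (a - 1) * ∑ i ∈ range b, x i ≤ b * ∑ i ∈ range (a - 1), x i := mod_cast hchebyshev
    _ ≤ b * ((a - 1) * q) := Nat.mul_le_mul_left b (hq ▸ hsum)
    _ = (a - 1) * (b * q) := by ring
end

section
/- Let σ be a partition of r with s(σ) parts and let 2 ≤ α ≤ s(σ) ≤ β. In the σ-hypergraph H(n,r,q|σ), the set of integers k for which there exists a k-(α,β)-colouring in which every class is monochromatic is exactly the interval [⌈(n - (s(σ)-1 - (α-1)·⌊(s(σ)-1)/(α-1)⌋)) / ⌊(s(σ)-1)/(α-1)⌋⌉, n]. -/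
/-!
Put `a = α - 1`, `t = ⌊(s - 1) / a⌋` and `ρ = s - 1 - a t`. A colouring that is constant on
the classes is a colouring `d` of the `n` classes; since every edge meets exactly `s` classes
and any `s` classes carry an edge, it is an `(α, β)`-colouring iff any `a` colours together
cover fewer than `s` classes.

If so, fewer than `a` colours cover more than `t` classes each. Enlarged to `a` colours they
cover at most `s - 1` classes, and each of the other `k - a` colours covers at most `t`, so
`n ≤ (k - a) t + s - 1 = k t + ρ`.

Conversely, if `n ≤ k t + ρ`, colour class `i` by `i mod k`: below `k t` any `a` residues
occur `a t` times, and at most `n - k t ≤ ρ` classes lie above, so `a` colours cover at most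
`s - 1` classes.
-/

open Finset

/-- `K` is an edge of the σ-hypergraph `H(n,r,q | σ)`: the multiset of non-zero
cardinalities of the intersections of `K` with the `n` classes equals `σ`. -/
def sigmaEdge (n q : ℕ) (σ : Multiset ℕ) (K : Finset (Fin n × Fin q)) : Prop :=
  (((Finset.univ : Finset (Fin n)).val.map
      fun i => (K.filter fun v => v.1 = i).card).filter fun m => m ≠ 0) = σ

/-- `c` is an `(α,β)`-colouring: every edge contains at least `α` and at most `β` colours. -/
def isABColouring (n q : ℕ) (σ : Multiset ℕ) (α β : ℕ) (c : Fin n × Fin q → ℕ) : Prop :=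
  ∀ K : Finset (Fin n × Fin q), sigmaEdge n q σ K →
    α ≤ (K.image c).card ∧ (K.image c).card ≤ β

/-- `c` uses exactly `k` colours. -/
def usesExactly (n q k : ℕ) (c : Fin n × Fin q → ℕ) : Prop :=
  ((Finset.univ : Finset (Fin n × Fin q)).image c).card = k

/-- every class of the σ-hypergraph is monochromatic under `c`. -/
def classesMonochromatic (n q : ℕ) (c : Fin n × Fin q → ℕ) : Prop :=
  ∀ v w : Fin n × Fin q, v.1 = w.1 → c v = c w

/-- `σ` is a partition of `r` (a multiset of positive integers summing to `r`). -/
def IsPartitionOf (σ : Multiset ℕ) (r : ℕ) : Prop := σ.sum = r ∧ 0 ∉ σ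

section Colouring

variable {ι γ : Type*} [Fintype ι] [DecidableEq γ] (d : ι → γ) {a s : ℕ}

theorem forall_lt_card_image_iff :
    (∀ S : Finset ι, #S = s → a < #(S.image d)) ↔
      ∀ D : Finset γ, #D ≤ a → #{i | d i ∈ D} < s := by
  constructor
  · intro h D hD
    by_contra! hs
    obtain ⟨S, hSD, hS⟩ := exists_subset_card_eq hs
    have himage : S.image d ⊆ D := by
      rintro _ hc
      obtain ⟨i, hi, rfl⟩ := mem_image.mp hc
      exact (mem_filter.mp (hSD hi)).2
    have := card_le_card himage
    have := h S hS
    omega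
  · intro h S hS
    by_contra! hle
    have hS_sub : S ⊆ ({i | d i ∈ S.image d} : Finset ι) := fun i hi =>
      mem_filter.mpr ⟨mem_univ i, mem_image_of_mem d hi⟩
    have := card_le_card hS_sub
    have := h _ hle
    omega

variable {d}

theorem card_large_fibres_lt (ha : 0 < a) (h : ∀ D : Finset γ, #D ≤ a → #{i | d i ∈ D} < s) :
    #{c ∈ univ.image d | (s - 1) / a < #{i | d i = c}} < a := by
  by_contra! hB
  obtain ⟨B, hB_sub, hB_card⟩ := exists_subset_card_eq hB
  have hlarge : #B • ((s - 1) / a + 1) ≤ ∑ c ∈ B, #{i | d i = c} :=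
    card_nsmul_le_sum _ _ _ fun c hc => (mem_filter.mp (hB_sub hc)).2
  rw [sum_card_fiberwise_eq_card_filter, hB_card, smul_eq_mul] at hlarge
  have := h B hB_card.le
  have := Nat.lt_div_mul_add (a := s - 1) ha
  rw [mul_add, mul_one, mul_comm] at hlarge
  omega

theorem card_le_of_forall_card_filter_mem_lt (ha : 0 < a)
    (h : ∀ D : Finset γ, #D ≤ a → #{i | d i ∈ D} < s) :
    Fintype.card ι ≤ (#(univ.image d) - a) * ((s - 1) / a) + (s - 1) := by
  set C := univ.image d
  have hfibres : Fintype.card ι = ∑ c ∈ C, #{i | d i = c} :=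
    card_eq_sum_card_fiberwise fun i _ => mem_image_of_mem d (mem_univ i)
  rcases lt_or_ge #C a with hC | hC
  · have := h C hC.le
    rw [← sum_card_fiberwise_eq_card_filter, ← hfibres] at this
    omega
  obtain ⟨D, hBD, hDC, hD⟩ :=
    exists_subsuperset_card_eq (filter_subset _ C) (card_large_fibres_lt ha h).le hC
  have hsmall : ∑ c ∈ C \ D, #{i | d i = c} ≤ #(C \ D) • ((s - 1) / a) :=
    sum_le_card_nsmul _ _ _ fun c hc => by
      obtain ⟨hcC, hcD⟩ := mem_sdiff.mp hc
      exact not_lt.mp fun hlt => hcD (hBD (mem_filter.mpr ⟨hcC, hlt⟩))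
  rw [card_sdiff_of_subset hDC, hD, smul_eq_mul] at hsmall
  have hD_lt := h D hD.le
  rw [← sum_card_fiberwise_eq_card_filter] at hD_lt
  rw [hfibres, ← sum_sdiff hDC]
  omega

theorem card_le_mul_add_of_forall_lt_card_image (ha : 0 < a) (hs : s ≤ Fintype.card ι)
    (h : ∀ S : Finset ι, #S = s → a < #(S.image d)) :
    Fintype.card ι ≤ #(univ.image d) * ((s - 1) / a) + (s - 1 - a * ((s - 1) / a)) := by
  obtain ⟨S, -, hS⟩ := exists_subset_card_eq (s := univ) hs
  have hak : a ≤ #(univ.image d) :=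
    (h S hS).le.trans (card_le_card (image_subset_image (subset_univ S)))
  have hbound := card_le_of_forall_card_filter_mem_lt ha ((forall_lt_card_image_iff d).mp h)
  have := Nat.mul_div_le (s - 1) a
  have := Nat.mul_le_mul_right ((s - 1) / a) hak
  rw [Nat.sub_mul] at hbound
  omega

end Colouring

theorem card_filter_mod_mem_le (n k t : ℕ) (D : Finset ℕ) :
    #{i : Fin n | (i : ℕ) % k ∈ D} ≤ #D * t + (n - k * t) := by
  let low : Finset (Fin n) := {i | (i : ℕ) % k ∈ D ∧ (i : ℕ) < k * t}
  let high : Finset (Fin n) := {i | k * t ≤ (i : ℕ)}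
  have hsplit : ({i | (i : ℕ) % k ∈ D} : Finset (Fin n)) ⊆ low ∪ high := by
    intro i hi
    by_cases hit : (i : ℕ) < k * t <;> simp_all [low, high]
  have hlow : #low ≤ #(D ×ˢ range t) := by
    refine card_le_card_of_injOn (fun i => ((i : ℕ) % k, (i : ℕ) / k)) ?_ ?_
    · intro i hi
      obtain ⟨hiD, hit⟩ := (mem_filter.mp hi).2
      exact mem_product.mpr ⟨hiD, mem_range.mpr (Nat.div_lt_of_lt_mul hit)⟩
    · intro i _ j _ hij
      simp only [Prod.mk.injEq] at hij
      exact Fin.ext (by rw [← Nat.div_add_mod i k, ← Nat.div_add_mod j k, hij.1, hij.2])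
  have hhigh : #high ≤ #(Ico (k * t) n) :=
    card_le_card_of_injOn (fun i => (i : ℕ))
      (fun i hi => mem_Ico.mpr ⟨(mem_filter.mp hi).2, i.isLt⟩) Fin.val_injective.injOn
  rw [card_product, card_range] at hlow
  rw [Nat.card_Ico] at hhigh
  exact (card_le_card hsplit).trans ((card_union_le low high).trans (by omega))

theorem forall_lt_card_image_mod {n k a s : ℕ} (hs : 0 < s)
    (hn : n ≤ k * ((s - 1) / a) + (s - 1 - a * ((s - 1) / a))) (S : Finset (Fin n))
    (hS : #S = s) : a < #(S.image fun i : Fin n => (i : ℕ) % k) := by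
  refine (forall_lt_card_image_iff _).mpr (fun D hD => ?_) S hS
  have := card_filter_mod_mem_le n k ((s - 1) / a) D
  have := Nat.mul_le_mul_right ((s - 1) / a) hD
  have := Nat.mul_div_le (s - 1) a
  omega

theorem image_val_mod_eq_range {n k : ℕ} (hk : 0 < k) (hkn : k ≤ n) :
    univ.image (fun i : Fin n => (i : ℕ) % k) = range k := by
  ext c
  simp only [mem_image, mem_univ, true_and, mem_range]
  constructor
  · rintro ⟨i, rfl⟩
    exact Nat.mod_lt _ hk
  · intro hc
    exact ⟨⟨c, hc.trans_le hkn⟩, Nat.mod_eq_of_lt hc⟩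

theorem exists_map_val_eq_of_card_eq {ι α : Type*} [DecidableEq ι] [Zero α] (σ : Multiset α)
    (S : Finset ι) (hS : #S = σ.card) : ∃ f : ι → α, S.val.map f = σ ∧ ∀ i ∉ S, f i = 0 := by
  induction σ using Multiset.induction generalizing S with
  | empty => exact ⟨0, by simp [card_eq_zero.mp hS], fun _ _ => rfl⟩
  | cons x σ ih =>
    obtain ⟨i₀, hi₀⟩ : S.Nonempty := card_pos.mp (by simp [hS])
    obtain ⟨f, hf, hf0⟩ := ih (S.erase i₀) (by simp [card_erase_of_mem hi₀, hS])
    refine ⟨Function.update f i₀ x, ?_, fun i hi => ?_⟩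
    · rw [← insert_erase hi₀, insert_val_of_notMem (notMem_erase i₀ S), Multiset.map_cons,
        Function.update_self, ← hf]
      congr 1
      exact Multiset.map_congr rfl fun i hi =>
        Function.update_of_ne (ne_of_mem_erase hi) _ _
    · have hne : i ≠ i₀ := fun h => hi (h ▸ hi₀)
      rw [Function.update_of_ne hne, hf0 i fun h => hi (mem_of_mem_erase h)]

section Hypergraph

variable {n q : ℕ}

theorem image_fst_eq_filter_card_ne_zero (K : Finset (Fin n × Fin q)) :
    K.image Prod.fst = ({i | #{v ∈ K | v.1 = i} ≠ 0} : Finset (Fin n)) := by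
  ext i
  simp only [mem_image, mem_filter, mem_univ, true_and, Ne, card_eq_zero,
    ← not_nonempty_iff_eq_empty, not_not, filter_nonempty_iff]

theorem card_image_fst_of_sigmaEdge {σ : Multiset ℕ} {K : Finset (Fin n × Fin q)}
    (h : sigmaEdge n q σ K) : #(K.image Prod.fst) = σ.card := by
  rw [image_fst_eq_filter_card_ne_zero, ← h, Multiset.filter_map, Multiset.card_map]
  rfl

def classPrefixes (q : ℕ) (f : Fin n → ℕ) : Finset (Fin n × Fin q) := {v | (v.2 : ℕ) < f v.1}

theorem card_filter_fst_eq_of_le (f : Fin n → ℕ) {i : Fin n} (hf : f i ≤ q) :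
    #{v ∈ classPrefixes q f | v.1 = i} = f i := by
  have hslice : {v ∈ classPrefixes q f | v.1 = i} =
      ({i} : Finset (Fin n)) ×ˢ ({b | (b : ℕ) < f i} : Finset (Fin q)) := by
    ext ⟨j, b⟩
    simp only [classPrefixes, mem_filter, mem_univ, true_and, mem_product, mem_singleton]
    constructor
    · rintro ⟨hb, rfl⟩
      exact ⟨rfl, hb⟩
    · rintro ⟨rfl, hb⟩
      exact ⟨hb, rfl⟩
  rw [hslice, card_product, card_singleton, one_mul, Fin.card_filter_val_lt]
  exact min_eq_right hf

theorem exists_sigmaEdge_image_fst_eq {σ : Multiset ℕ} (h0 : 0 ∉ σ) (hq : ∀ x ∈ σ, x ≤ q)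
    (S : Finset (Fin n)) (hS : #S = σ.card) :
    ∃ K : Finset (Fin n × Fin q), sigmaEdge n q σ K ∧ K.image Prod.fst = S := by
  obtain ⟨f, hf, hf0⟩ := exists_map_val_eq_of_card_eq σ S hS
  have hmem : ∀ i ∈ S, f i ∈ σ := fun i hi => hf ▸ Multiset.mem_map_of_mem f hi
  have hfq : ∀ i, f i ≤ q := fun i => by
    by_cases hi : i ∈ S
    · exact hq _ (hmem i hi)
    · simp [hf0 i hi]
  have hsupp : ({i | f i ≠ 0} : Finset (Fin n)) = S := by
    ext i
    simp only [mem_filter, mem_univ, true_and]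
    exact ⟨fun h => by_contra fun hi => h (hf0 i hi), fun hi h => h0 (h ▸ hmem i hi)⟩
  refine ⟨classPrefixes q f, ?_, ?_⟩
  · unfold sigmaEdge
    rw [Multiset.map_congr rfl fun i _ => card_filter_fst_eq_of_le f (hfq i),
      Multiset.filter_map, ← hf, ← hsupp]
    rfl
  · rw [image_fst_eq_filter_card_ne_zero, ← hsupp]
    simp only [card_filter_fst_eq_of_le f (hfq _)]

theorem classesMonochromatic.eq_comp_fst {c : Fin n × Fin q → ℕ}
    (hc : classesMonochromatic n q c) (b : Fin q) : c = (fun i => c (i, b)) ∘ Prod.fst :=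
  funext fun v => hc v (v.1, b) rfl

theorem classesMonochromatic_comp_fst (d : Fin n → ℕ) :
    classesMonochromatic n q (d ∘ Prod.fst) :=
  fun _ _ h => congrArg d h

theorem usesExactly_comp_fst_iff (hq : 0 < q) (k : ℕ) (d : Fin n → ℕ) :
    usesExactly n q k (d ∘ Prod.fst) ↔ #(univ.image d) = k := by
  unfold usesExactly
  rw [← image_image, ← univ_product_univ, product_image_fst ⟨⟨0, hq⟩, mem_univ _⟩]

theorem isABColouring_comp_fst_iff {σ : Multiset ℕ} {α β : ℕ} (h0 : 0 ∉ σ)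
    (hq : ∀ x ∈ σ, x ≤ q) (hβ : σ.card ≤ β) (d : Fin n → ℕ) :
    isABColouring n q σ α β (d ∘ Prod.fst) ↔
      ∀ S : Finset (Fin n), #S = σ.card → α ≤ #(S.image d) := by
  simp only [isABColouring, ← image_image]
  constructor
  · intro h S hS
    obtain ⟨K, hK, rfl⟩ := exists_sigmaEdge_image_fst_eq h0 hq S hS
    exact (h K hK).1
  · intro h K hK
    have hcard := card_image_fst_of_sigmaEdge hK
    exact ⟨h _ hcard, card_image_le.trans (hcard.trans_le hβ)⟩

end Hypergraph

theorem stmt3 (n r q α β Δ : ℕ) (σ : Multiset ℕ)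
    (hpart : IsPartitionOf σ r)
    (hΔmem : Δ ∈ σ) (hΔmax : ∀ x ∈ σ, x ≤ Δ)
    (hα : 2 ≤ α) (hαs : α ≤ σ.card) (hsβ : σ.card ≤ β)
    (hq : Δ ≤ q) (hn : σ.card ≤ n) :
    ∀ k : ℕ,
      (∃ c : Fin n × Fin q → ℕ, classesMonochromatic n q c ∧
          isABColouring n q σ α β c ∧ usesExactly n q k c) ↔
        ((n - (σ.card - 1 - (α - 1) * ((σ.card - 1) / (α - 1)))
              + ((σ.card - 1) / (α - 1)) - 1) / ((σ.card - 1) / (α - 1)) ≤ k ∧ k ≤ n) := by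
  intro k
  obtain ⟨-, h0⟩ := hpart
  have hσq : ∀ x ∈ σ, x ≤ q := fun x hx => (hΔmax x hx).trans hq
  have hq0 : 0 < q := (Nat.pos_of_ne_zero fun hΔ => h0 (hΔ ▸ hΔmem)).trans_le hq
  -- `a + 1 ≤ m` unfolds to `a < m`, the form the colouring lemmas use.
  obtain ⟨a, rfl⟩ : ∃ a, α = a + 1 := ⟨α - 1, by omega⟩
  simp only [Nat.add_sub_cancel]
  have ht : 0 < (σ.card - 1) / a := Nat.div_pos (by omega) (by omega)
  rw [Nat.div_le_iff_le_mul_add_pred ht, mul_comm _ k]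
  constructor
  · rintro ⟨c, hc, hAB, hk⟩
    rw [hc.eq_comp_fst ⟨0, hq0⟩, isABColouring_comp_fst_iff h0 hσq hsβ] at hAB
    rw [hc.eq_comp_fst ⟨0, hq0⟩, usesExactly_comp_fst_iff hq0] at hk
    have hbound := card_le_mul_add_of_forall_lt_card_image (by omega) (by simpa using hn) hAB
    rw [Fintype.card_fin, hk] at hbound
    exact ⟨by omega, hk ▸ card_image_le.trans_eq (card_fin n)⟩
  · rintro ⟨hnk, hkn⟩
    have hk0 : 0 < k := Nat.pos_of_ne_zero fun hk => by simp only [hk, zero_mul] at hnk; omega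
    refine ⟨(fun i : Fin n => (i : ℕ) % k) ∘ Prod.fst, classesMonochromatic_comp_fst _, ?_, ?_⟩
    · rw [isABColouring_comp_fst_iff h0 hσq hsβ]
      exact forall_lt_card_image_mod (by omega) (by omega)
    · rw [usesExactly_comp_fst_iff hq0, image_val_mod_eq_range hk0 hkn, card_range]
end

section
/- Suppose all classes of H(n,r,q|σ) are coloured monochromatically with k colours, where 2 ≤ α ≤ s(σ) ≤ β, q ≥ Δ(σ) and n ≥ s(σ). If n_i denotes the number of classes of colour i, then the colouring is a valid (α,β)-colouring if and only if any α-1 of the colours together cover at most s(σ)-1 classes, i.e., the sum of the α-1 largest n_i is at most s(σ)-1. -/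
open Finset

/-- Cardinality of an initial segment of `Fin q`. -/
lemma aux_finq_card (q a : ℕ) (h : a ≤ q) :
    (univ.filter fun j : Fin q => (j : ℕ) < a).card = a := by
  have : (univ.filter fun j : Fin q => (j : ℕ) < a)
      = (Finset.range a).attachFin (fun m hm => lt_of_lt_of_le (Finset.mem_range.mp hm) h) := by
    ext j; simp [Finset.mem_attachFin]
  rw [this, Finset.card_attachFin, Finset.card_range]

/-- Counting the intersection of the "staircase" edge with a class. -/
lemma aux_count (n q : ℕ) (m : Fin n → ℕ) (hmq : ∀ i, m i ≤ q) (i : Fin n) :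
    (((univ : Finset (Fin n × Fin q)).filter fun v => (v.2 : ℕ) < m v.1).filter
      fun v => v.1 = i).card = m i := by
  have he : (((univ : Finset (Fin n × Fin q)).filter fun v => (v.2 : ℕ) < m v.1).filter
      fun v => v.1 = i) = (univ.filter fun j : Fin q => (j : ℕ) < m i).map
        ⟨fun j => (i, j), fun a b hab => by simpa using hab⟩ := by
    ext ⟨x, y⟩
    simp only [Finset.mem_filter, Finset.mem_univ, true_and, Finset.mem_map,
      Function.Embedding.coeFn_mk]
    constructor
    · rintro ⟨hy, rfl⟩; exact ⟨y, hy, rfl⟩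
    · rintro ⟨j, hj, h⟩; cases h; exact ⟨hj, rfl⟩
  rw [he, Finset.card_map, aux_finq_card _ _ (hmq i)]

/-- Distributing a multiset of `#S` values over the classes in `S`. -/
lemma aux_exists_m {γ : Type*} [DecidableEq γ] (σ : Multiset ℕ) :
    ∀ S : Finset γ, S.card = Multiset.card σ →
      ∃ m : γ → ℕ, (∀ i, i ∉ S → m i = 0) ∧ S.val.map m = σ := by
  induction σ using Multiset.induction_on with
  | empty =>
    intro S hS
    refine ⟨fun _ => 0, fun _ _ => rfl, ?_⟩
    simp at hS
    simp [hS]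
  | cons a σ' ih =>
    intro S hS
    have hne : S.Nonempty := by
      rw [← Finset.card_pos, hS]; simp
    obtain ⟨x, hx⟩ := hne
    obtain ⟨m', hm'0, hm'⟩ := ih (S.erase x) (by rw [Finset.card_erase_of_mem hx, hS]; simp)
    refine ⟨Function.update m' x a, ?_, ?_⟩
    · intro i hi
      have hix : i ≠ x := fun he => hi (he ▸ hx)
      rw [Function.update_of_ne hix]
      exact hm'0 i (fun h => hi (Finset.mem_of_mem_erase h))
    · have hval : S.val = x ::ₘ (S.erase x).val := by
        rw [Finset.erase_val, ← Multiset.cons_erase (Finset.mem_val.mpr hx)]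
        simp [Multiset.erase_cons_head]
      rw [hval, Multiset.map_cons, Function.update_self]
      congr 1
      rw [← hm']
      apply Multiset.map_congr rfl
      intro i hi
      exact Function.update_of_ne (Finset.ne_of_mem_erase (Finset.mem_val.mp hi)) _ _

/-- Splitting `univ.val` along a subset `S`. -/
lemma aux_univ_val_split (n : ℕ) (S : Finset (Fin n)) :
    (univ : Finset (Fin n)).val = S.val + (univ \ S).val := by
  have h := Finset.union_sdiff_of_subset (Finset.subset_univ S)
  calc (univ : Finset (Fin n)).val = (S.disjUnion (univ \ S) disjoint_sdiff).val := by
        rw [Finset.disjUnion_eq_union, h]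
    _ = S.val + (univ \ S).val := rfl

/-- Cardinality bookkeeping for filtered maps. -/
lemma aux_card_filter_map {γ : Type*} (s : Multiset γ) (f : γ → ℕ) :
    Multiset.card ((s.map f).filter fun m => m ≠ 0)
      = Multiset.card (s.filter fun i => f i ≠ 0) := by
  rw [Multiset.filter_map, Multiset.card_map]
  simp [Function.comp]

theorem stmt5 (n r q α β Δ : ℕ) (σ : Multiset ℕ)
    (hpart : IsPartitionOf σ r)
    (hΔmem : Δ ∈ σ) (hΔmax : ∀ x ∈ σ, x ≤ Δ)
    (hα : 2 ≤ α) (hαs : α ≤ σ.card) (hsβ : σ.card ≤ β)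
    (hq : Δ ≤ q) (hn : σ.card ≤ n) (cl : Fin n → ℕ) :
    isABColouring n q σ α β (fun v => cl v.1) ↔
      ∀ T : Finset ℕ, T.card = α - 1 →
        ((Finset.univ : Finset (Fin n)).filter fun i => cl i ∈ T).card ≤ σ.card - 1 := by
  obtain ⟨hsum, h0σ⟩ := hpart
  constructor
  · -- forward direction
    intro hAB T hT
    by_contra hcon
    push_neg at hcon
    have hcard : Multiset.card σ ≤ ((univ : Finset (Fin n)).filter fun i => cl i ∈ T).card := by
      omega
    obtain ⟨S, hST, hScard⟩ := Finset.exists_subset_card_eq hcard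
    obtain ⟨m, hm0, hmS⟩ := aux_exists_m σ S hScard
    have hmem : ∀ i ∈ S, m i ∈ σ := fun i hi => by
      rw [← hmS]; exact Multiset.mem_map_of_mem _ (Finset.mem_val.mpr hi)
    have hmq : ∀ i, m i ≤ q := by
      intro i
      by_cases h : i ∈ S
      · exact le_trans (hΔmax _ (hmem i h)) hq
      · simp [hm0 i h]
    set K := (univ : Finset (Fin n × Fin q)).filter fun v => (v.2 : ℕ) < m v.1 with hK
    have hf : ∀ i, (K.filter fun v => v.1 = i).card = m i := aux_count n q m hmq
    have hedge : sigmaEdge n q σ K := by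
      unfold sigmaEdge
      have h1 : ((univ : Finset (Fin n)).val.map fun i => (K.filter fun v => v.1 = i).card)
          = univ.val.map m := Multiset.map_congr rfl (fun i _ => hf i)
      rw [h1, aux_univ_val_split n S, Multiset.map_add, Multiset.filter_add]
      have h2 : (S.val.map m).filter (fun x => x ≠ 0) = S.val.map m := by
        rw [Multiset.filter_eq_self]
        intro b hb
        rw [hmS] at hb
        exact fun hb0 => h0σ (hb0 ▸ hb)
      have h3 : ((univ \ S).val.map m).filter (fun x => x ≠ 0) = 0 := by
        rw [Multiset.filter_eq_nil]
        intro b hb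
        obtain ⟨i, hi, rfl⟩ := Multiset.mem_map.mp hb
        have : i ∉ S := (Finset.mem_sdiff.mp (Finset.mem_val.mp hi)).2
        simp [hm0 i this]
      rw [h2, h3, add_zero, hmS]
    have hlow := (hAB K hedge).1
    have himg : K.image (fun v => cl v.1) ⊆ T := by
      intro x hx
      obtain ⟨v, hv, rfl⟩ := Finset.mem_image.mp hx
      have hv1 : v.1 ∈ S := by
        by_contra h
        have hm := hm0 v.1 h
        rw [hK] at hv
        have := (Finset.mem_filter.mp hv).2
        omega
      exact (Finset.mem_filter.mp (hST hv1)).2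
    have : α ≤ T.card := le_trans hlow (Finset.card_le_card himg)
    omega
  · -- backward direction
    intro hcond K hK
    unfold sigmaEdge at hK
    set f : Fin n → ℕ := fun i => (K.filter fun v => v.1 = i).card with hfdef
    have hC : K.image Prod.fst = (univ : Finset (Fin n)).filter fun i => f i ≠ 0 := by
      ext i
      simp only [Finset.mem_image, Finset.mem_filter, Finset.mem_univ, true_and]
      constructor
      · rintro ⟨v, hv, rfl⟩
        rw [hfdef]
        rw [Finset.card_ne_zero]
        exact ⟨v, Finset.mem_filter.mpr ⟨hv, rfl⟩⟩
      · intro h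
        rw [hfdef, Finset.card_ne_zero] at h
        obtain ⟨v, hv⟩ := h
        obtain ⟨hvK, hvi⟩ := Finset.mem_filter.mp hv
        exact ⟨v, hvK, hvi⟩
    have hCcard : (K.image Prod.fst).card = Multiset.card σ := by
      rw [hC]
      have hcard := congrArg Multiset.card hK
      rw [aux_card_filter_map] at hcard
      rw [Finset.card_def, Finset.filter_val]
      exact hcard
    have himg : K.image (fun v => cl v.1) = (K.image Prod.fst).image cl := by
      rw [Finset.image_image]
      rfl
    constructor
    · by_contra hlt
      push_neg at hlt
      have hle : (K.image (fun v => cl v.1)).card ≤ α - 1 := by omega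
      obtain ⟨T, hsub, hTcard⟩ :=
        Infinite.exists_superset_card_eq (K.image (fun v => cl v.1)) (α - 1) hle
      have hsubset : K.image Prod.fst ⊆ (univ : Finset (Fin n)).filter fun i => cl i ∈ T := by
        intro i hi
        simp only [Finset.mem_filter, Finset.mem_univ, true_and]
        apply hsub
        rw [himg]
        exact Finset.mem_image_of_mem cl hi
      have h1 := Finset.card_le_card hsubset
      have h2 := hcond T hTcard
      omega
    · calc (K.image (fun v => cl v.1)).card = ((K.image Prod.fst).image cl).card := by
            rw [himg]
        _ ≤ (K.image Prod.fst).card := Finset.card_image_le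
        _ = Multiset.card σ := hCcard
        _ ≤ β := hsβ
end

section
/- Let H = H(n,r,q|σ) with Δ(σ) ≥ 2, 2 ≤ α ≤ s(σ) = β, n ≥ s(σ)² and q ≥ (Δ(σ)-1)β + 1. Then in every valid (α,β)-colouring of H, every class is monochromatic; hence the (α,β)-spectrum of H equals the monochromatic zone. -/
open Finset
/-! Call a colour `x` heavy in class `i` if at least `Δ` vertices of class `i` have colour `x`,
and let `s = |σ|`. No colour is heavy in `s` classes at once: those classes would carry a
monochromatic σ-edge. Every class `D` has a heavy colour. Otherwise `D` shows at least `s + 1`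
colours, as `q > (Δ - 1) s`, so a part of size `Δ` in `D` can supply up to `Δ` fresh colours.
Hence a rainbow partial transversal avoiding `D` has at most `s - Δ` vertices, or it could be
completed to a σ-edge with more than `β = s` colours. Take such a transversal `W` maximal. Then
every other class only uses the `|W| ≤ s - 2` colours of `W`, so it has a heavy colour among
them, and counting those `n - 1 - |W|` classes against the `s - 1` bound contradicts `n ≥ s²`.
Now suppose a class `D` shows two colours `a ≠ b`. By the same count the heavy colours of the
classes other than `D` take at least `s + 1` values. So `s - 1` further classes have distinct
heavy colours other than `a` and `b`, and together with a `Δ`-part of `D` through both colours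
they span a σ-edge with `s + 1` colours. -/

theorem Finset.exists_map_val_eq_of_card_eq {X β : Type*} [Nonempty β] (I : Finset X) :
    ∀ μ : Multiset β, #I = Multiset.card μ → ∃ g : X → β, I.val.map g = μ := by
  classical
  induction I using Finset.induction_on with
  | empty =>
    intro μ h
    exact ⟨fun _ => Classical.arbitrary β, by simpa [eq_comm] using h⟩
  | insert a I ha ih =>
    intro μ h
    obtain ⟨x, hx⟩ :=
      Multiset.card_pos_iff_exists_mem.mp (h ▸ card_pos.mpr ⟨a, mem_insert_self a I⟩)
    obtain ⟨g, hg⟩ := ih (μ.erase x) (by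
      rw [Multiset.card_erase_of_mem hx, ← h, card_insert_of_notMem ha]; rfl)
    refine ⟨Function.update g a x, ?_⟩
    have hgI : I.val.map (Function.update g a x) = I.val.map g :=
      Multiset.map_congr rfl fun y hy => Function.update_of_ne (ne_of_mem_of_not_mem hy ha) _ _
    rw [insert_val_of_notMem ha, Multiset.map_cons, Function.update_self, hgI, hg,
      Multiset.cons_erase hx]

section Edges

variable {n q : ℕ}

theorem card_filter_fst_eq {K : Finset (Fin n × Fin q)} {i : Fin n} {S : Finset (Fin q)}
    (h : ∀ y, (i, y) ∈ K ↔ y ∈ S) : #{v ∈ K | v.1 = i} = #S := by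
  rw [← one_mul #S, ← card_singleton i, ← card_product]
  congr 1
  ext ⟨j, y⟩
  simp only [mem_filter, mem_product, mem_singleton]
  constructor
  · rintro ⟨hy, rfl⟩
    exact ⟨rfl, (h y).1 hy⟩
  · rintro ⟨rfl, hy⟩
    exact ⟨(h y).2 hy, rfl⟩

theorem sigmaEdge_iff (σ : Multiset ℕ) (K : Finset (Fin n × Fin q)) :
    sigmaEdge n q σ K ↔ (K.image Prod.fst).val.map (fun i => #{v ∈ K | v.1 = i}) = σ := by
  have hsupport : ({i | #{v ∈ K | v.1 = i} ≠ 0} : Finset (Fin n)) = K.image Prod.fst := by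
    ext i
    simp only [mem_filter, mem_univ, true_and, ← pos_iff_ne_zero, card_pos, mem_image]
    exact ⟨fun ⟨v, hv⟩ => ⟨v, (mem_filter.mp hv).1, (mem_filter.mp hv).2⟩,
      fun ⟨v, hv, hvi⟩ => ⟨v, mem_filter.mpr ⟨hv, hvi⟩⟩⟩
  rw [sigmaEdge, Multiset.filter_map, ← hsupport, filter_val]
  rfl

theorem sigmaEdge_of_parts {σ : Multiset ℕ} {I : Finset (Fin n)} {T : Fin n → Finset (Fin q)}
    (hT : ∀ i ∈ I, (T i).Nonempty) (hσ : I.val.map (fun i => #(T i)) = σ) :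
    sigmaEdge n q σ {v | v.1 ∈ I ∧ v.2 ∈ T v.1} := by
  rw [sigmaEdge_iff, ← hσ]
  have himage : ({v | v.1 ∈ I ∧ v.2 ∈ T v.1} : Finset (Fin n × Fin q)).image Prod.fst = I := by
    ext i
    simp only [mem_image, mem_filter, mem_univ, true_and, Prod.exists, exists_and_right,
      exists_eq_right]
    exact ⟨fun ⟨_, hi, _⟩ => hi, fun hi => (hT i hi).imp fun _ hy => ⟨hi, hy⟩⟩
  rw [himage]
  exact Multiset.map_congr rfl fun i hi => card_filter_fst_eq fun y => by simp [mem_def.mpr hi]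

theorem sigmaEdge.union_singleton_product {τ : Multiset ℕ} {K : Finset (Fin n × Fin q)}
    (hK : sigmaEdge n q τ K) {D : Fin n} (hKD : ∀ v ∈ K, v.1 ≠ D) {S : Finset (Fin q)}
    (hS : S.Nonempty) : sigmaEdge n q (#S ::ₘ τ) (K ∪ {D} ×ˢ S) := by
  rw [sigmaEdge_iff] at hK ⊢
  have hD : D ∉ K.image Prod.fst := by simpa using fun y hy => hKD (D, y) hy rfl
  rw [image_union, product_image_fst hS, union_singleton, insert_val_of_notMem hD,
    Multiset.map_cons, ← hK]
  congr 1
  · exact card_filter_fst_eq fun y => by simpa using fun hy => absurd rfl (hKD (D, y) hy)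
  · refine Multiset.map_congr rfl fun i hi => ?_
    have hiD : i ≠ D := ne_of_mem_of_not_mem hi hD
    rw [filter_union, filter_false_of_mem (s := {D} ×ˢ S), union_empty]
    simpa using fun _ _ => hiD.symm

theorem exists_sigmaEdge {σ : Multiset ℕ} (h0 : 0 ∉ σ) {I : Finset (Fin n)}
    (hI : #I = Multiset.card σ) {P A : Fin n → Finset (Fin q)} (hPA : ∀ i ∈ I, P i ⊆ A i)
    (hsize : ∀ i ∈ I, ∀ x ∈ σ, #(P i) ≤ x ∧ x ≤ #(A i)) :
    ∃ K, sigmaEdge n q σ K ∧ (∀ i ∈ I, ∀ y ∈ P i, (i, y) ∈ K) ∧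
      ∀ v ∈ K, v.1 ∈ I ∧ v.2 ∈ A v.1 := by
  obtain ⟨g, hg⟩ := I.exists_map_val_eq_of_card_eq σ hI
  have hgσ : ∀ i ∈ I, g i ∈ σ := fun i hi => hg ▸ Multiset.mem_map_of_mem g hi
  have hT : ∀ i ∈ I, ∃ T, P i ⊆ T ∧ T ⊆ A i ∧ #T = g i := fun i hi =>
    exists_subsuperset_card_eq (hPA i hi) (hsize i hi _ (hgσ i hi)).1 (hsize i hi _ (hgσ i hi)).2
  choose! T hPT hTA hTg using hT
  refine ⟨({v | v.1 ∈ I ∧ v.2 ∈ T v.1} : Finset (Fin n × Fin q)),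
    sigmaEdge_of_parts (fun i hi => ?_) ?_, ?_, ?_⟩
  · rw [← card_pos, hTg i hi]
    exact Nat.pos_of_ne_zero fun h => h0 (h ▸ hgσ i hi)
  · rw [← hg]
    exact Multiset.map_congr rfl fun i hi => hTg i hi
  · intro i hi y hy
    simpa using ⟨hi, hPT i hi hy⟩
  · intro v hv
    simp only [mem_filter, mem_univ, true_and] at hv
    exact ⟨hv.1, hTA _ hv.1 hv.2⟩

end Edges

section Colourings

variable {n q α β Δ : ℕ} {σ : Multiset ℕ} {c : Fin n × Fin q → ℕ}

def colourClass (c : Fin n × Fin q → ℕ) (i : Fin n) (x : ℕ) : Finset (Fin q) :=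
  {y | c (i, y) = x}

def classColours (c : Fin n × Fin q → ℕ) (i : Fin n) : Finset ℕ :=
  univ.image fun y => c (i, y)

theorem exists_le_card_colourClass (i : Fin n) (h : (Δ - 1) * #(classColours c i) < q) :
    ∃ x, Δ ≤ #(colourClass c i x) := by
  obtain ⟨x, -, hx⟩ := exists_lt_card_fiber_of_mul_lt_card_of_maps_to (s := univ) (n := Δ - 1)
    (fun y _ => mem_image_of_mem (fun y => c (i, y)) (mem_univ y))
    (by simpa [classColours, mul_comm] using h)
  exact ⟨x, by unfold colourClass; omega⟩

theorem exists_eq_of_le_card_colourClass {i : Fin n} {x : ℕ} (hΔ : 0 < Δ)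
    (h : Δ ≤ #(colourClass c i x)) : ∃ y, c (i, y) = x := by
  obtain ⟨y, hy⟩ := card_pos.mp (hΔ.trans_le h)
  exact ⟨y, by simpa [colourClass] using hy⟩

theorem card_lt_of_forall_le_card_colourClass (hc : isABColouring n q σ α β c) (h0 : 0 ∉ σ)
    (hΔmax : ∀ y ∈ σ, y ≤ Δ) (hα : 2 ≤ α) {x : ℕ} {F : Finset (Fin n)}
    (hF : ∀ i ∈ F, Δ ≤ #(colourClass c i x)) : #F < σ.card := by
  by_contra! hsF
  obtain ⟨F', hF'F, hF'⟩ := exists_subset_card_eq hsF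
  obtain ⟨K, hK, -, hKx⟩ := exists_sigmaEdge h0 hF' (P := fun _ => ∅)
    (fun _ _ => empty_subset _) fun i hi y hy => ⟨by simp, (hΔmax y hy).trans (hF i (hF'F hi))⟩
  have hmono : K.image c ⊆ {x} := by
    intro z hz
    obtain ⟨v, hv, rfl⟩ := mem_image.mp hz
    simpa [colourClass] using (hKx v hv).2
  have := (hc K hK).1.trans (card_le_card hmono)
  simp only [card_singleton] at this
  omega

theorem card_image_add_le_of_sigmaEdge_erase (hc : isABColouring n q σ α β c) (h0 : 0 ∉ σ)
    (hβ : β = σ.card) (hΔmem : Δ ∈ σ) (hΔq : Δ ≤ q) {D : Fin n}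
    (hD : σ.card + 1 ≤ #(classColours c D)) {K : Finset (Fin n × Fin q)}
    (hK : sigmaEdge n q (σ.erase Δ) K) (hKD : ∀ v ∈ K, v.1 ≠ D) :
    #(K.image c) + Δ ≤ σ.card := by
  set Y := K.image c
  -- a `Δ`-part in `D` can add `min Δ (|σ| + 1 - #Y)` colours outside `Y`
  by_contra! hY
  obtain ⟨Z, hZ, hZcard⟩ := exists_subset_card_eq (s := classColours c D \ Y)
    (n := σ.card + 1 - #Y) (by have := le_card_sdiff Y (classColours c D); omega)
  obtain ⟨S₀, -, hS₀inj, hS₀Z⟩ := exists_subset_injOn_image_eq_of_surjOn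
    (f := fun y => c (D, y)) Set.univ Z fun z hz => by
      obtain ⟨y, -, hy⟩ := mem_image.mp (mem_sdiff.mp (hZ hz)).1
      exact ⟨y, Set.mem_univ y, hy⟩
  have hS₀card : #S₀ = #Z := by rw [← hS₀Z, card_image_of_injOn hS₀inj]
  obtain ⟨S, hS₀S, -, hS⟩ := exists_subsuperset_card_eq (subset_univ S₀)
    (by omega : #S₀ ≤ Δ) (by simpa using hΔq)
  have hedge : sigmaEdge n q σ (K ∪ {D} ×ˢ S) := by
    have hΔ : 0 < Δ := Nat.pos_of_ne_zero fun h => h0 (h ▸ hΔmem)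
    have := hK.union_singleton_product hKD (S := S) (card_pos.mp (by omega))
    rwa [hS, Multiset.cons_erase hΔmem] at this
  have hsub : Y ∪ Z ⊆ (K ∪ {D} ×ˢ S).image c := by
    refine union_subset (image_subset_image subset_union_left) fun z hz => ?_
    rw [← hS₀Z] at hz
    obtain ⟨y, hy, rfl⟩ := mem_image.mp hz
    exact mem_image_of_mem c (mem_union_right K (mem_product.mpr ⟨mem_singleton_self D, hS₀S hy⟩))
  have hYZ := card_le_card hsub
  rw [card_union_of_disjoint (disjoint_of_subset_right hZ disjoint_sdiff)] at hYZ
  have := (hc _ hedge).2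
  omega

def IsRainbowTransversal (c : Fin n × Fin q → ℕ) (W : Finset (Fin n × Fin q)) : Prop :=
  Set.InjOn Prod.fst (W : Set (Fin n × Fin q)) ∧ Set.InjOn c (W : Set (Fin n × Fin q))

theorem IsRainbowTransversal.mono {W W' : Finset (Fin n × Fin q)} (hW : IsRainbowTransversal c W)
    (hW' : W' ⊆ W) : IsRainbowTransversal c W' :=
  ⟨hW.1.mono (coe_subset.mpr hW'), hW.2.mono (coe_subset.mpr hW')⟩

theorem exists_isRainbowTransversal_forall_mem_image (c : Fin n × Fin q → ℕ) (D : Fin n) :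
    ∃ W, IsRainbowTransversal c W ∧ (∀ v ∈ W, v.1 ≠ D) ∧
      ∀ E y, E ≠ D → E ∉ W.image Prod.fst → c (E, y) ∈ W.image c := by
  classical
  obtain ⟨W, hWmem, hWmax⟩ := exists_max_image
    {W : Finset (Fin n × Fin q) | IsRainbowTransversal c W ∧ ∀ v ∈ W, v.1 ≠ D} card
    ⟨∅, by simp [IsRainbowTransversal]⟩
  obtain ⟨hW, hWD⟩ := (mem_filter.mp hWmem).2
  refine ⟨W, hW, hWD, fun E y hED hE => ?_⟩
  by_contra hEy
  have hEyW : (E, y) ∉ W := fun h => hE (mem_image_of_mem _ h)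
  have := hWmax (insert (E, y) W) (by
    refine mem_filter.mpr ⟨mem_univ _, ⟨?_, ?_⟩, (forall_mem_insert _ _ _).mpr ⟨hED, hWD⟩⟩
    · rw [coe_insert, Set.injOn_insert (mem_coe.not.mpr hEyW)]
      exact ⟨hW.1, by simpa [← coe_image] using hE⟩
    · rw [coe_insert, Set.injOn_insert (mem_coe.not.mpr hEyW)]
      exact ⟨hW.2, by simpa [← coe_image] using hEy⟩)
  rw [card_insert_of_notMem hEyW] at this
  omega

theorem card_add_le_of_isRainbowTransversal (hc : isABColouring n q σ α β c) (h0 : 0 ∉ σ)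
    (hβ : β = σ.card) (hΔmem : Δ ∈ σ) (hΔmax : ∀ y ∈ σ, y ≤ Δ) (hΔq : Δ ≤ q) (hn : σ.card ≤ n)
    {D : Fin n} (hD : σ.card + 1 ≤ #(classColours c D)) {W : Finset (Fin n × Fin q)}
    (hW : IsRainbowTransversal c W) (hWD : ∀ v ∈ W, v.1 ≠ D) (hWs : #W < σ.card) :
    #W + Δ ≤ σ.card := by
  have h0' : 0 ∉ σ.erase Δ := fun h => h0 (Multiset.mem_of_mem_erase h)
  have hτ : (σ.erase Δ).card = σ.card - 1 := by rw [Multiset.card_erase_of_mem hΔmem]; rfl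
  have hWclasses : W.image Prod.fst ⊆ univ.erase D := fun i hi => by
    obtain ⟨v, hv, rfl⟩ := mem_image.mp hi
    exact mem_erase.mpr ⟨hWD v hv, mem_univ _⟩
  obtain ⟨J, hWJ, hJD, hJ⟩ := exists_subsuperset_card_eq hWclasses (n := σ.card - 1)
    (by rw [card_image_of_injOn hW.1]; omega) (by simp; omega)
  set P : Fin n → Finset (Fin q) := fun j => {v ∈ W | v.1 = j}.image Prod.snd
  have hP : ∀ j, #(P j) ≤ 1 := fun j =>
    card_image_le.trans <| card_le_one.mpr fun u hu v hv =>
      hW.1 (mem_filter.mp hu).1 (mem_filter.mp hv).1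
        ((mem_filter.mp hu).2.trans (mem_filter.mp hv).2.symm)
  obtain ⟨K, hK, hWK, hKJ⟩ := exists_sigmaEdge h0' (by rw [hJ, hτ]) (A := fun _ => univ)
    (fun _ _ => subset_univ (P _)) fun j _ x hx =>
      ⟨(hP j).trans (Nat.one_le_iff_ne_zero.mpr fun h => h0' (h ▸ hx)),
        by simpa using (hΔmax x (Multiset.mem_of_mem_erase hx)).trans hΔq⟩
  have hKD : ∀ v ∈ K, v.1 ≠ D := fun v hv => (mem_erase.mp (hJD (hKJ v hv).1)).1
  have hWK' : W ⊆ K := fun v hv =>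
    hWK v.1 (hWJ (mem_image_of_mem _ hv)) v.2 (mem_image.mpr ⟨v, mem_filter.mpr ⟨hv, rfl⟩, rfl⟩)
  calc #W + Δ = #(W.image c) + Δ := by rw [card_image_of_injOn hW.2]
    _ ≤ #(K.image c) + Δ := by gcongr
    _ ≤ σ.card := card_image_add_le_of_sigmaEdge_erase hc h0 hβ hΔmem hΔq hD hK hKD

theorem card_erase_sdiff_le_of_forall_mem_image (hc : isABColouring n q σ α β c) (h0 : 0 ∉ σ)
    (hΔmax : ∀ y ∈ σ, y ≤ Δ) (hΔ : 0 < Δ) (hα : 2 ≤ α) {D : Fin n} {W : Finset (Fin n × Fin q)}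
    (hWq : (Δ - 1) * #(W.image c) < q)
    (hW : ∀ E y, E ≠ D → E ∉ W.image Prod.fst → c (E, y) ∈ W.image c) :
    #(univ.erase D \ W.image Prod.fst) ≤ (σ.card - 1) * #(W.image c) := by
  have hheavy : ∀ E ∈ univ.erase D \ W.image Prod.fst,
      ∃ x ∈ W.image c, Δ ≤ #(colourClass c E x) := by
    intro E hE
    obtain ⟨hED, hEW⟩ := mem_sdiff.mp hE
    have hcols : classColours c E ⊆ W.image c := fun z hz => by
      obtain ⟨y, -, rfl⟩ := mem_image.mp hz
      exact hW E y (mem_erase.mp hED).1 hEW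
    obtain ⟨x, hx⟩ := exists_le_card_colourClass (Δ := Δ) E
      ((Nat.mul_le_mul_left (Δ - 1) (card_le_card hcols)).trans_lt hWq)
    obtain ⟨y, rfl⟩ := exists_eq_of_le_card_colourClass hΔ hx
    exact ⟨_, hcols (mem_image_of_mem _ (mem_univ y)), hx⟩
  choose! m hmW hm using hheavy
  exact card_le_mul_card_image_of_maps_to hmW _ fun x _ => Nat.le_sub_one_of_lt <|
    card_lt_of_forall_le_card_colourClass hc h0 hΔmax hα fun E hE =>
      (mem_filter.mp hE).2 ▸ hm E (mem_filter.mp hE).1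

theorem exists_le_card_colourClass_of_isABColouring (hc : isABColouring n q σ α β c)
    (h0 : 0 ∉ σ) (hΔmem : Δ ∈ σ) (hΔmax : ∀ y ∈ σ, y ≤ Δ) (hΔ2 : 2 ≤ Δ) (hα : 2 ≤ α)
    (hβ : β = σ.card) (hq : (Δ - 1) * σ.card + 1 ≤ q) (hn : σ.card ^ 2 ≤ n) (D : Fin n) :
    ∃ x, Δ ≤ #(colourClass c D x) := by
  have hs : 1 ≤ σ.card := Multiset.card_pos_iff_exists_mem.mpr ⟨Δ, hΔmem⟩
  have hΔq : Δ ≤ q := by have := Nat.mul_le_mul_left (Δ - 1) hs; omega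
  by_contra! hD
  have hDcols : σ.card + 1 ≤ #(classColours c D) := by
    by_contra! h
    obtain ⟨x, hx⟩ := exists_le_card_colourClass (Δ := Δ) D
      ((Nat.mul_le_mul_left (Δ - 1) (Nat.le_of_lt_succ h)).trans_lt (by omega))
    exact (hD x).not_ge hx
  obtain ⟨W, hW, hWD, hWmax⟩ := exists_isRainbowTransversal_forall_mem_image c D
  have hWs : #W + Δ ≤ σ.card := by
    by_contra! h
    obtain ⟨W', hW'W, hW'⟩ := exists_subset_card_eq (s := W) (n := σ.card + 1 - Δ) (by omega)
    have := card_add_le_of_isRainbowTransversal hc h0 hβ hΔmem hΔmax hΔq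
      ((Nat.le_self_pow two_ne_zero _).trans hn) hDcols (hW.mono hW'W)
      (fun v hv => hWD v (hW'W hv)) (by omega)
    omega
  have hcount := card_erase_sdiff_le_of_forall_mem_image hc h0 hΔmax (by omega) hα
    (by
      rw [card_image_of_injOn hW.2]
      exact (Nat.mul_le_mul_left (Δ - 1) (by omega : #W ≤ σ.card)).trans_lt (by omega)) hWmax
  have hG := le_card_sdiff (W.image Prod.fst) (univ.erase D)
  rw [card_erase_of_mem (mem_univ D), card_univ, Fintype.card_fin,
    card_image_of_injOn hW.1] at hG
  rw [card_image_of_injOn hW.2] at hcount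
  have harith : (σ.card - 1) * #W + #W + 1 < σ.card ^ 2 := by
    obtain ⟨t, ht⟩ : ∃ t, σ.card = #W + 2 + t := ⟨σ.card - (#W + 2), by omega⟩
    rw [ht, show #W + 2 + t - 1 = #W + 1 + t by omega]
    nlinarith
  omega

theorem card_add_one_le_card_image_erase (hc : isABColouring n q σ α β c) (h0 : 0 ∉ σ)
    (hΔmax : ∀ y ∈ σ, y ≤ Δ) (hα : 2 ≤ α) (hs : 2 ≤ σ.card) (hn : σ.card ^ 2 ≤ n)
    {m : Fin n → ℕ} (hm : ∀ i, Δ ≤ #(colourClass c i (m i))) (D : Fin n) :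
    σ.card + 1 ≤ #((univ.erase D).image m) := by
  have hfib : #(univ.erase D) ≤ (σ.card - 1) * #((univ.erase D).image m) :=
    card_le_mul_card_image _ _ fun x _ => Nat.le_sub_one_of_lt <|
      card_lt_of_forall_le_card_colourClass hc h0 hΔmax hα fun E hE => (mem_filter.mp hE).2 ▸ hm E
  rw [card_erase_of_mem (mem_univ D), card_univ, Fintype.card_fin] at hfib
  by_contra! h
  have hle := Nat.mul_le_mul_left (σ.card - 1) (Nat.le_of_lt_succ h)
  have harith : (σ.card - 1) * σ.card + 1 < σ.card ^ 2 := by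
    obtain ⟨t, ht⟩ : ∃ t, σ.card = t + 2 := ⟨σ.card - 2, by omega⟩
    rw [ht, show t + 2 - 1 = t + 1 by omega]
    nlinarith
  omega

theorem exists_sigmaEdge_of_points (h0 : 0 ∉ σ) (hΔmem : Δ ∈ σ) (hΔmax : ∀ y ∈ σ, y ≤ Δ)
    (hΔq : Δ ≤ q) {D : Fin n} {J : Finset (Fin n)} (hJD : D ∉ J) (hJ : #J + 1 = σ.card)
    (y : Fin n → Fin q) {S : Finset (Fin q)} (hS : #S = Δ) :
    ∃ K, sigmaEdge n q σ K ∧ (∀ j ∈ J, (j, y j) ∈ K) ∧ ∀ x ∈ S, (D, x) ∈ K := by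
  have h0' : 0 ∉ σ.erase Δ := fun h => h0 (Multiset.mem_of_mem_erase h)
  obtain ⟨K, hK, hJK, hKJ⟩ := exists_sigmaEdge h0' (I := J)
    (by rw [Multiset.card_erase_of_mem hΔmem, ← hJ]; rfl) (P := fun j => {y j})
    (A := fun _ => univ) (fun _ _ => subset_univ _) fun j _ x hx =>
      ⟨card_singleton (y j) ▸ Nat.one_le_iff_ne_zero.mpr fun h => h0' (h ▸ hx),
        by simpa using (hΔmax x (Multiset.mem_of_mem_erase hx)).trans hΔq⟩
  have hKD : ∀ u ∈ K, u.1 ≠ D := fun u hu h => hJD (h ▸ (hKJ u hu).1)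
  have hSne : S.Nonempty := card_pos.mp (hS ▸ Nat.pos_of_ne_zero fun h => h0 (h ▸ hΔmem))
  refine ⟨K ∪ {D} ×ˢ S, ?_, fun j hj => mem_union_left _ (hJK j hj _ (mem_singleton_self _)),
    fun x hx => mem_union_right _ (mem_product.mpr ⟨mem_singleton_self D, hx⟩)⟩
  have := hK.union_singleton_product hKD hSne
  rwa [hS, Multiset.cons_erase hΔmem] at this

theorem classesMonochromatic_of_isABColouring (hc : isABColouring n q σ α β c)
    (h0 : 0 ∉ σ) (hΔmem : Δ ∈ σ) (hΔmax : ∀ y ∈ σ, y ≤ Δ) (hΔ2 : 2 ≤ Δ) (hα : 2 ≤ α)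
    (hαs : α ≤ σ.card) (hβ : β = σ.card) (hq : (Δ - 1) * σ.card + 1 ≤ q)
    (hn : σ.card ^ 2 ≤ n) : classesMonochromatic n q c := by
  have hs : 2 ≤ σ.card := hα.trans hαs
  have hΔq : Δ ≤ q := by have := Nat.mul_le_mul_left (Δ - 1) hs; omega
  choose m hm using
    exists_le_card_colourClass_of_isABColouring hc h0 hΔmem hΔmax hΔ2 hα hβ hq hn
  choose y hy using fun j => exists_eq_of_le_card_colourClass (by omega) (hm j)
  rintro ⟨D, a⟩ ⟨D', b⟩ (rfl : D = D')
  by_contra hab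
  obtain ⟨V, hV, hVcard⟩ := exists_subset_card_eq
    (s := (univ.erase D).image m \ {c (D, a), c (D, b)}) (n := σ.card - 1) (by
      have := le_card_sdiff {c (D, a), c (D, b)} ((univ.erase D).image m)
      have := card_le_two (a := c (D, a)) (b := c (D, b))
      have := card_add_one_le_card_image_erase hc h0 hΔmax hα hs hn hm D
      omega)
  obtain ⟨J, hJD, hJinj, hJV⟩ := exists_subset_injOn_image_eq_of_surjOn (f := m)
    ((univ.erase D : Finset (Fin n)) : Set (Fin n)) V fun x hx => by
      obtain ⟨E, hE, hEx⟩ := mem_image.mp (mem_sdiff.mp (hV hx)).1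
      exact ⟨E, hE, hEx⟩
  obtain ⟨S, habS, -, hS⟩ := exists_subsuperset_card_eq (subset_univ {a, b})
    (card_le_two.trans hΔ2) (by simpa using hΔq)
  obtain ⟨K, hK, hJK, hSK⟩ := exists_sigmaEdge_of_points h0 hΔmem hΔmax hΔq
    (fun h => (mem_erase.mp (coe_subset.mp hJD h)).1 rfl)
    (by rw [← card_image_of_injOn hJinj, hJV, hVcard]; omega) y hS
  have hsub : insert (c (D, a)) (insert (c (D, b)) V) ⊆ K.image c := by
    refine insert_subset (mem_image_of_mem c (hSK _ (habS (mem_insert_self _ _))))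
      (insert_subset (mem_image_of_mem c (hSK _ (habS (mem_insert_of_mem
        (mem_singleton_self _))))) ?_)
    rw [← hJV]
    intro x hx
    obtain ⟨j, hj, rfl⟩ := mem_image.mp hx
    exact hy j ▸ mem_image_of_mem c (hJK j hj)
  have hcard : #(insert (c (D, a)) (insert (c (D, b)) V)) = σ.card + 1 := by
    have haV : c (D, a) ∉ V := fun h => by simpa using (mem_sdiff.mp (hV h)).2
    have hbV : c (D, b) ∉ V := fun h => by simpa using (mem_sdiff.mp (hV h)).2
    rw [card_insert_of_notMem (by simpa [hab] using haV), card_insert_of_notMem hbV, hVcard]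
    omega
  have := (hc K hK).2
  have := card_le_card hsub
  omega

end Colourings

theorem stmt7 (n r q α β Δ : ℕ) (σ : Multiset ℕ)
    (hpart : IsPartitionOf σ r)
    (hΔmem : Δ ∈ σ) (hΔmax : ∀ x ∈ σ, x ≤ Δ) (hΔ2 : 2 ≤ Δ)
    (hα : 2 ≤ α) (hαs : α ≤ σ.card) (hsβ : σ.card = β)
    (hn : σ.card ^ 2 ≤ n) (hq : (Δ - 1) * β + 1 ≤ q) :
    (∀ c : Fin n × Fin q → ℕ, isABColouring n q σ α β c → classesMonochromatic n q c) ∧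
      ∀ k : ℕ,
        (∃ c : Fin n × Fin q → ℕ, isABColouring n q σ α β c ∧ usesExactly n q k c) ↔
          (∃ c : Fin n × Fin q → ℕ, classesMonochromatic n q c ∧
            isABColouring n q σ α β c ∧ usesExactly n q k c) := by
  have hmono : ∀ c : Fin n × Fin q → ℕ, isABColouring n q σ α β c →
      classesMonochromatic n q c := fun c hc =>
    classesMonochromatic_of_isABColouring hc hpart.2 hΔmem hΔmax hΔ2 hα hαs hsβ.symm
      (hsβ ▸ hq) hn
  exact ⟨hmono, fun k => ⟨fun ⟨c, hc, hk⟩ => ⟨c, hmono c hc, hc, hk⟩,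
    fun ⟨c, _, hc, hk⟩ => ⟨c, hc, hk⟩⟩⟩
end

section
/- Suppose 1 ≤ s(σ) < α ≤ β < r, q ≥ β(Δ(σ)-1) + 1 and n ≥ 2s(σ) - 1. Then H(n,r,q|σ) is not (α,β)-colourable: every vertex-colouring contains an edge with fewer than α or more than β distinct colours. -/
open Finset

/-! Call a class poor if some colour occurs at least `Δ` times in it; by pigeonhole
(`q > β (Δ - 1)`) every other class shows more than `β` colours. If `s(σ)` classes are poor,
putting the parts of `σ` monochromatically into them gives an edge with at most `s(σ) < α`
colours. Otherwise at least `n - (s(σ) - 1) ≥ s(σ)` classes are rich, and filling the parts of `σ`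
into them greedily, each part bringing in as many new colours as it can, gives an edge with
`min (β + 1) r = β + 1` colours. -/

def placement {ι X : Type*} [DecidableEq ι] [DecidableEq X] (A : Finset ι)
    (T : ι → Finset X) : Finset (ι × X) :=
  A.biUnion fun i => {i} ×ˢ T i

section Placement

variable {ι X : Type*} [DecidableEq ι] [DecidableEq X]

lemma card_filter_fst_placement (A : Finset ι) (T : ι → Finset X) (i : ι) :
    #((placement A T).filter fun v => v.1 = i) = if i ∈ A then #(T i) else 0 := by
  have hfilter : (placement A T).filter (fun v => v.1 = i) = if i ∈ A then {i} ×ˢ T i else ∅ := by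
    ext ⟨j, x⟩
    split_ifs with hi <;> simp [placement] <;> aesop
  rw [hfilter]
  split_ifs <;> simp

lemma image_placement {C : Type*} [DecidableEq C] (c : ι × X → C) (A : Finset ι)
    (T : ι → Finset X) :
    (placement A T).image c = A.biUnion fun i => (T i).image fun x => c (i, x) := by
  rw [placement, biUnion_image]
  refine biUnion_congr rfl fun i _ => ?_
  ext; simp

end Placement

lemma exists_subset_map_val_eq {ι β : Type*} [DecidableEq ι] [Nonempty β] (σ : Multiset β) :
    ∀ B : Finset ι, σ.card ≤ #B → ∃ A ⊆ B, ∃ a : ι → β, A.val.map a = σ := by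
  induction σ using Multiset.induction_on with
  | empty => exact fun _ _ => ⟨∅, empty_subset _, fun _ => Classical.arbitrary β, rfl⟩
  | cons x σ ih =>
    intro B hB
    obtain ⟨i, hi⟩ : B.Nonempty := card_pos.mp (by simp at hB; omega)
    obtain ⟨A, hAB, a, ha⟩ := ih (B.erase i) (by rw [card_erase_of_mem hi]; simp at hB; omega)
    have hiA : i ∉ A := fun h => by simpa using hAB h
    refine ⟨insert i A, insert_subset hi (hAB.trans (erase_subset _ _)), Function.update a i x, ?_⟩
    rw [insert_val_of_notMem hiA, Multiset.map_cons, Function.update_self, ← ha]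
    congr 1
    exact Multiset.map_congr rfl fun j hj => Function.update_of_ne (by rintro rfl; exact hiA hj) _ _

lemma exists_subset_card_eq_le_card_image_sdiff {α C : Type*} [DecidableEq α] [DecidableEq C]
    {f : α → C} {s : Finset α} {D : Finset C} {k a : ℕ} (hka : k ≤ a) (has : a ≤ #s)
    (hk : k ≤ #(s.image f \ D)) : ∃ t ⊆ s, #t = a ∧ k ≤ #(t.image f \ D) := by
  obtain ⟨F, hF, rfl⟩ := exists_subset_card_eq hk
  obtain ⟨u, hus, hinj, hu⟩ := exists_subset_injOn_image_eq_of_surjOn (f := f) s F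
    (surjOn_iff_subset_image.mpr (hF.trans sdiff_subset))
  have hFu : #F = #u := hu ▸ card_image_of_injOn hinj
  obtain ⟨t, hut, hts, rfl⟩ := exists_subsuperset_card_eq (coe_subset.mp hus) (hFu ▸ hka) has
  refine ⟨t, hts, rfl, card_le_card fun y hy => mem_sdiff.mpr ⟨?_, (mem_sdiff.mp (hF hy)).2⟩⟩
  exact image_subset_image hut (hu ▸ hy)

lemma exists_card_biUnion_image_ge {ι X C : Type*} [DecidableEq ι] [DecidableEq X]
    [DecidableEq C] [Fintype X] (f : ι → X → C) (a : ι → ℕ) (m : ℕ) (A : Finset ι)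
    (ha : ∀ i ∈ A, a i ≤ Fintype.card X) (hf : ∀ i ∈ A, m ≤ #(univ.image (f i))) :
    ∃ T : ι → Finset X, (∀ i ∈ A, #(T i) = a i) ∧
      min m (∑ i ∈ A, a i) ≤ #(A.biUnion fun i => (T i).image (f i)) := by
  induction A using Finset.induction_on with
  | empty => exact ⟨fun _ => ∅, by simp, by simp⟩
  | insert i A hiA ih =>
    obtain ⟨T, hT, hTcard⟩ := ih (fun j hj => ha j (mem_insert_of_mem hj))
      (fun j hj => hf j (mem_insert_of_mem hj))
    set D := A.biUnion fun j => (T j).image (f j)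
    -- class `i` can add `min (a i) (m - #D)` colours not yet in `D`
    have hnew : m - #D ≤ #(univ.image (f i) \ D) :=
      (Nat.sub_le_sub_right (hf i (mem_insert_self i A)) _).trans (le_card_sdiff D _)
    obtain ⟨t, -, ht, htD⟩ := exists_subset_card_eq_le_card_image_sdiff (min_le_left (a i) _)
      (ha i (mem_insert_self i A)) ((min_le_right _ _).trans hnew)
    refine ⟨Function.update T i t, fun j hj => ?_, ?_⟩
    · rcases mem_insert.mp hj with rfl | hj
      · simpa using ht
      · rw [Function.update_of_ne (ne_of_mem_of_not_mem hj hiA)]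
        exact hT j hj
    · have hold : (A.biUnion fun j => (Function.update T i t j).image (f j)) = D :=
        biUnion_congr rfl fun j hj => by rw [Function.update_of_ne (ne_of_mem_of_not_mem hj hiA)]
      rw [biUnion_insert, Function.update_self, hold, ← card_sdiff_add_card, sum_insert hiA]
      omega

lemma exists_le_card_fiber_or_lt_card_image {X C : Type*} [Fintype X] [DecidableEq C]
    (f : X → C) {β Δ : ℕ} (h : β * (Δ - 1) < Fintype.card X) :
    (∃ y, Δ ≤ #{x | f x = y}) ∨ β < #(univ.image f) := by
  refine (le_or_gt #(univ.image f) β).imp (fun hle => ?_) id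
  obtain ⟨y, -, hy⟩ := exists_lt_card_fiber_of_mul_lt_card_of_maps_to (s := univ) (n := Δ - 1)
    (fun x _ => mem_image_of_mem f (mem_univ x))
    ((Nat.mul_le_mul_right _ hle).trans_lt (by simpa using h))
  exact ⟨y, by omega⟩

lemma sigmaEdge_placement {n q : ℕ} {σ : Multiset ℕ} (h0 : 0 ∉ σ) {A : Finset (Fin n)}
    {a : Fin n → ℕ} (ha : A.val.map a = σ) {T : Fin n → Finset (Fin q)}
    (hT : ∀ i ∈ A, #(T i) = a i) : sigmaEdge n q σ (placement A T) := by
  have hpos : ∀ i ∈ A, a i ≠ 0 := fun i hi h => h0 (ha ▸ h ▸ Multiset.mem_map_of_mem a hi)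
  have hsupp : ({i | #((placement A T).filter fun v => v.1 = i) ≠ 0} : Finset (Fin n)) = A := by
    ext i
    simp only [mem_filter, mem_univ, true_and, card_filter_fst_placement]
    split_ifs with hi
    · simpa [hT i hi, hi] using hpos i hi
    · simpa using hi
  rw [sigmaEdge, Multiset.filter_map, ← filter_val]
  simp only [Function.comp_def, hsupp, ← ha]
  exact Multiset.map_congr rfl fun i hi => by rw [card_filter_fst_placement, if_pos (mem_val.mp hi), hT i hi]

section Edges

variable {n q : ℕ} (c : Fin n × Fin q → ℕ) {σ : Multiset ℕ}

open Classical in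
lemma exists_sigmaEdge_card_image_le (h0 : 0 ∉ σ) {Δ : ℕ} (hΔ : ∀ x ∈ σ, x ≤ Δ)
    (hM : σ.card ≤ #{i | ∃ col, Δ ≤ #{x | c (i, x) = col}}) :
    ∃ K, sigmaEdge n q σ K ∧ #(K.image c) ≤ σ.card := by
  obtain ⟨A, hAM, a, ha⟩ := exists_subset_map_val_eq σ _ hM
  have hmono : ∀ i ∈ A, ∃ col, ∃ t : Finset (Fin q), #t = a i ∧ ∀ x ∈ t, c (i, x) = col := by
    intro i hi
    obtain ⟨col, hcol⟩ := (mem_filter.mp (hAM hi)).2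
    obtain ⟨t, hts, ht⟩ :=
      exists_subset_card_eq ((hΔ _ (ha ▸ Multiset.mem_map_of_mem a hi)).trans hcol)
    exact ⟨col, t, ht, fun x hx => (mem_filter.mp (hts hx)).2⟩
  choose! col T hT hTcol using hmono
  refine ⟨placement A T, sigmaEdge_placement h0 ha hT, ?_⟩
  calc #((placement A T).image c) ≤ #(A.image col) := by
        refine card_le_card ?_
        rw [image_placement, biUnion_subset]
        exact fun i hi => image_subset_iff.mpr fun x hx => hTcol i hi x hx ▸ mem_image_of_mem col hi
    _ ≤ #A := card_image_le
    _ = σ.card := by rw [← ha, Multiset.card_map, card_val]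

lemma exists_sigmaEdge_lt_card_image (h0 : 0 ∉ σ) {β : ℕ} (hq : ∀ x ∈ σ, x ≤ q)
    (hβ : β < σ.sum) (hR : σ.card ≤ #{i | β < #(univ.image fun x => c (i, x))}) :
    ∃ K, sigmaEdge n q σ K ∧ β < #(K.image c) := by
  obtain ⟨A, hAR, a, ha⟩ := exists_subset_map_val_eq σ _ hR
  obtain ⟨T, hT, hcard⟩ := exists_card_biUnion_image_ge (fun i x => c (i, x)) a (β + 1) A
    (fun i hi => by simpa using hq _ (ha ▸ Multiset.mem_map_of_mem a hi))
    (fun i hi => (mem_filter.mp (hAR hi)).2)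
  have hsum : ∑ i ∈ A, a i = σ.sum := by rw [sum_eq_multiset_sum, ha]
  refine ⟨placement A T, sigmaEdge_placement h0 ha hT, ?_⟩
  rw [image_placement]
  omega

end Edges

theorem stmt10_general (n r q α β Δ : ℕ) (σ : Multiset ℕ)
    (hpart : IsPartitionOf σ r)
    (hΔmax : ∀ x ∈ σ, x ≤ Δ)
    (hsα : σ.card < α) (hαβ : α ≤ β) (hβr : β < r)
    (hq : β * (Δ - 1) + 1 ≤ q) (hn : 2 * σ.card - 1 ≤ n) :
    ∀ c : Fin n × Fin q → ℕ, ¬ isABColouring n q σ α β c := by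
  classical
  intro c hc
  obtain ⟨rfl, h0⟩ := hpart
  by_cases hM : σ.card ≤ #{i | ∃ col, Δ ≤ #{x | c (i, x) = col}}
  · obtain ⟨K, hK, hcard⟩ := exists_sigmaEdge_card_image_le c h0 hΔmax hM
    have := (hc K hK).1
    omega
  have hR : σ.card ≤ #{i | β < #(univ.image fun x => c (i, x))} := by
    have hsplit := card_filter_add_card_filter_not (s := univ)
      (fun i : Fin n => ∃ col, Δ ≤ #{x | c (i, x) = col})
    rw [card_univ, Fintype.card_fin] at hsplit
    have hq' : β * (Δ - 1) < Fintype.card (Fin q) := by simp; omega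
    calc σ.card ≤ #{i | ¬ ∃ col, Δ ≤ #{x | c (i, x) = col}} := by omega
      _ ≤ _ := card_le_card fun i hi => by
        simpa using (exists_le_card_fiber_or_lt_card_image _ hq').resolve_left (mem_filter.mp hi).2
  have hΔq : ∀ x ∈ σ, x ≤ q := fun x hx => by
    have := Nat.le_mul_of_pos_left (Δ - 1) (show 0 < β by omega)
    have := hΔmax x hx
    omega
  obtain ⟨K, hK, hcard⟩ := exists_sigmaEdge_lt_card_image c h0 hΔq hβr hR
  have := (hc K hK).2
  omega

theorem stmt10 (n r q α β Δ : ℕ) (σ : Multiset ℕ)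
    (hpart : IsPartitionOf σ r)
    (hΔmem : Δ ∈ σ) (hΔmax : ∀ x ∈ σ, x ≤ Δ)
    (hs1 : 1 ≤ σ.card) (hsα : σ.card < α) (hαβ : α ≤ β) (hβr : β < r)
    (hq : β * (Δ - 1) + 1 ≤ q) (hn : 2 * σ.card - 1 ≤ n) :
    ∀ c : Fin n × Fin q → ℕ, ¬ isABColouring n q σ α β c :=
  stmt10_general n r q α β Δ σ hpart hΔmax hsα hαβ hβr hq hn
end

section
/- Let H = H(n,r,q|σ) with δ(σ) ≥ r - β + 1 and 2 ≤ s(σ) ≤ β. Given any valid (2,β)-colouring of H and any class V of H, recolouring all vertices of V with a single brand-new colour z (not used elsewhere) yields a valid (2,β)-colouring of H. -/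
open Finset

theorem stmt12 (n r q β δ : ℕ) (σ : Multiset ℕ)
    (hpart : IsPartitionOf σ r)
    (hδmem : δ ∈ σ) (hδmin : ∀ x ∈ σ, δ ≤ x)
    (hδ : r - β + 1 ≤ δ) (hs2 : 2 ≤ σ.card) (hsβ : σ.card ≤ β)
    (c : Fin n × Fin q → ℕ) (hc : isABColouring n q σ 2 β c)
    (i₀ : Fin n) (z : ℕ) (hz : ∀ v : Fin n × Fin q, c v ≠ z) :
    isABColouring n q σ 2 β (fun v => if v.1 = i₀ then z else c v) := by
  classical
  intro K hK
  set f : Fin n → ℕ := fun i => (K.filter fun v => v.1 = i).card with hf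
  have hK' : ((Finset.univ : Finset (Fin n)).val.map f).filter (fun m => m ≠ 0) = σ := hK
  -- K.card = r
  have hKfib : K.card = ∑ i, f i :=
    Finset.card_eq_sum_card_fiberwise (fun x _ => Finset.mem_univ x.1)
  have hsum : σ.sum = ∑ i, f i := by
    rw [← hK']
    have : (((Finset.univ : Finset (Fin n)).val.map f).filter (fun m => m ≠ 0)).sum
        + (((Finset.univ : Finset (Fin n)).val.map f).filter (fun m => ¬ m ≠ 0)).sum
        = ((Finset.univ : Finset (Fin n)).val.map f).sum := by
      rw [← Multiset.sum_add, Multiset.filter_add_not]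
    have h0 : (((Finset.univ : Finset (Fin n)).val.map f).filter
        (fun m => ¬ m ≠ 0)).sum = 0 := by
      apply Multiset.sum_eq_zero
      intro x hx
      have := (Multiset.mem_filter.1 hx).2
      omega
    have hfull : ((Finset.univ : Finset (Fin n)).val.map f).sum = ∑ i, f i := rfl
    omega
  have hKr : K.card = r := by rw [hKfib, ← hsum, hpart.1]
  by_cases hm : f i₀ = 0
  · -- class i₀ not met: colouring unchanged on K
    have hempty : K.filter (fun v => v.1 = i₀) = ∅ := Finset.card_eq_zero.1 hm
    have himg : K.image (fun v => if v.1 = i₀ then z else c v) = K.image c := by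
      apply Finset.image_congr
      intro v hv
      have : v.1 ≠ i₀ := by
        intro h
        have : v ∈ K.filter (fun v => v.1 = i₀) := Finset.mem_filter.2 ⟨hv, h⟩
        simp [hempty] at this
      simp [this]
    rw [himg]; exact hc K hK
  · have hmσ : f i₀ ∈ σ := by
      rw [← hK']
      exact Multiset.mem_filter.2 ⟨Multiset.mem_map.2 ⟨i₀, Finset.mem_univ i₀, rfl⟩, hm⟩
    have hδm : δ ≤ f i₀ := hδmin _ hmσ
    set K₀ := K.filter (fun v => v.1 = i₀) with hK₀
    set K₁ := K.filter (fun v => ¬ v.1 = i₀) with hK₁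
    have hsplit : K₀ ∪ K₁ = K := Finset.filter_union_filter_not_eq _ K
    have hcards : K₀.card + K₁.card = K.card := Finset.card_filter_add_card_filter_not _
    have hK₀card : K₀.card = f i₀ := rfl
    have hK₀ne : K₀.Nonempty := Finset.card_pos.1 (by omega)
    -- K₁ nonempty since σ has ≥ 2 parts
    have hK₁ne : K₁.Nonempty := by
      rw [Finset.nonempty_iff_ne_empty]
      intro hemp
      have hzero : ∀ i : Fin n, i ≠ i₀ → f i = 0 := by
        intro i hi
        have : K.filter (fun v => v.1 = i) = ∅ := by
          rw [Finset.eq_empty_iff_forall_notMem]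
          intro v hv
          rcases Finset.mem_filter.1 hv with ⟨hvK, hv1⟩
          have : v ∈ K₁ := Finset.mem_filter.2 ⟨hvK, by rw [hv1]; exact hi⟩
          simp [hemp] at this
        simp [hf, this]
      have hcard : σ.card = (Finset.univ.filter (fun i : Fin n => f i ≠ 0)).card := by
        rw [← hK']
        rw [Multiset.filter_map]
        simp [Finset.card_filter, Finset.filter]
      have hsub : Finset.univ.filter (fun i : Fin n => f i ≠ 0) ⊆ {i₀} := by
        intro i hi
        rcases Finset.mem_filter.1 hi with ⟨-, hne⟩
        by_contra h
        exact hne (hzero i (by simpa using h))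
      have := Finset.card_le_card hsub
      simp only [ne_eq] at hcard this
      simp at this
      rw [hcard] at hs2
      omega
    have himg : K.image (fun v => if v.1 = i₀ then z else c v)
        = insert z (K₁.image c) := by
      rw [← hsplit, Finset.image_union]
      have h0 : K₀.image (fun v => if v.1 = i₀ then z else c v) = {z} := by
        rw [Finset.eq_singleton_iff_nonempty_unique_mem]
        constructor
        · exact hK₀ne.image _
        · intro y hy
          rcases Finset.mem_image.1 hy with ⟨v, hv, hvy⟩
          have : v.1 = i₀ := (Finset.mem_filter.1 hv).2
          simp [this] at hvy
          omega
      have h1 : K₁.image (fun v => if v.1 = i₀ then z else c v) = K₁.image c := by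
        apply Finset.image_congr
        intro v hv
        have : ¬ v.1 = i₀ := (Finset.mem_filter.1 hv).2
        simp [this]
      rw [h0, h1, Finset.insert_eq]
    have hznot : z ∉ K₁.image c := by
      intro h
      rcases Finset.mem_image.1 h with ⟨v, hv, hvz⟩
      exact hz v hvz
    rw [himg, Finset.card_insert_of_notMem hznot]
    have hpos : 0 < (K₁.image c).card := Finset.card_pos.2 (hK₁ne.image _)
    have hle : (K₁.image c).card ≤ K₁.card := Finset.card_image_le
    constructor
    · omega
    · have h1 : 1 ≤ f i₀ := by omega
      omega
end

section
/- Let H = H(n,r,q|σ) with δ(σ) ≥ r - β + 1 and 2 ≤ s(σ) ≤ β. Given a valid (2,β)-colouring of H, a class V, and two distinct colours x, y appearing in V but in no other class, recolouring all vertices of V coloured x or y with a single new colour z yields a valid (2,β)-colouring of H. -/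
open Finset

theorem stmt13 (n r q β δ : ℕ) (σ : Multiset ℕ)
    (hpart : IsPartitionOf σ r)
    (hδmem : δ ∈ σ) (hδmin : ∀ x ∈ σ, δ ≤ x)
    (hδ : r - β + 1 ≤ δ) (hs2 : 2 ≤ σ.card) (hsβ : σ.card ≤ β)
    (c : Fin n × Fin q → ℕ) (hc : isABColouring n q σ 2 β c)
    (i₀ : Fin n) (x y z : ℕ) (hxy : x ≠ y)
    (hxin : ∃ v : Fin n × Fin q, v.1 = i₀ ∧ c v = x)
    (hyin : ∃ v : Fin n × Fin q, v.1 = i₀ ∧ c v = y)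
    (hxonly : ∀ v : Fin n × Fin q, c v = x → v.1 = i₀)
    (hyonly : ∀ v : Fin n × Fin q, c v = y → v.1 = i₀)
    (hz : ∀ v : Fin n × Fin q, c v ≠ z) :
    isABColouring n q σ 2 β
      (fun v => if v.1 = i₀ ∧ (c v = x ∨ c v = y) then z else c v) := by
  intro K hK
  set c' : Fin n × Fin q → ℕ :=
    fun v => if v.1 = i₀ ∧ (c v = x ∨ c v = y) then z else c v with hc'
  have hfun : ∀ v : Fin n × Fin q,
      c' v = (fun a => if a = x ∨ a = y then z else a) (c v) := by
    intro v
    by_cases h : c v = x ∨ c v = y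
    · have hv : v.1 = i₀ := h.elim (hxonly v) (hyonly v)
      simp [hc', h, hv]
    · simp [hc', h]
  have himg : K.image c' = (K.image c).image (fun a => if a = x ∨ a = y then z else a) := by
    rw [Finset.image_image]
    exact Finset.image_congr (fun v _ => hfun v)
  obtain ⟨h2, hβ⟩ := hc K hK
  -- there is a vertex of K outside class i₀
  have hw : ∃ w ∈ K, w.1 ≠ i₀ := by
    by_contra hall
    push_neg at hall
    have hcard := congrArg Multiset.card hK
    have hsub : (Finset.univ.filter
        (fun i => ¬ (K.filter fun v => v.1 = i).card = 0)) ⊆ {i₀} := by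
      intro i hi
      simp only [Finset.mem_filter, Finset.mem_singleton] at hi ⊢
      obtain ⟨-, hi⟩ := hi
      obtain ⟨v, hv⟩ := Finset.card_ne_zero.mp hi
      simp only [Finset.mem_filter] at hv
      exact hv.2 ▸ (hall v hv.1).symm ▸ rfl
    have hle : ((Finset.univ.filter
        (fun i => ¬ (K.filter fun v => v.1 = i).card = 0))).card ≤ 1 := by
      simpa using Finset.card_le_card hsub
    have hcard' : Multiset.card (Multiset.filter (fun m => m ≠ 0)
        (Multiset.map (fun i => (K.filter fun v => v.1 = i).card) Finset.univ.val))
        = (Finset.univ.filter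
            (fun i => ¬ (K.filter fun v => v.1 = i).card = 0)).card := by
      rw [← Multiset.countP_eq_card_filter, Multiset.countP_map]
      rfl
    rw [hcard'] at hcard
    omega
  by_cases hA : ∃ v ∈ K, c v = x ∨ c v = y
  · obtain ⟨v, hvK, hvc⟩ := hA
    obtain ⟨w, hwK, hwi⟩ := hw
    have hwx : c w ≠ x := fun h => hwi (hxonly w h)
    have hwy : c w ≠ y := fun h => hwi (hyonly w h)
    have hcz : c' v = z := by
      have hv : v.1 = i₀ := hvc.elim (hxonly v) (hyonly v)
      simp [hc', hv, hvc]
    have hcw : c' w = c w := by simp [hc', hwx, hwy]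
    constructor
    · apply Finset.one_lt_card.mpr
      refine ⟨z, ?_, c w, ?_, ?_⟩
      · exact hcz ▸ Finset.mem_image_of_mem c' hvK
      · exact hcw ▸ Finset.mem_image_of_mem c' hwK
      · exact fun h => hz w h.symm
    · rw [himg]
      exact le_trans Finset.card_image_le hβ
  · push_neg at hA
    have : K.image c' = K.image c := by
      apply Finset.image_congr
      intro v hvK
      have := hA v hvK
      simp [hc', this.1, this.2]
    rw [this]
    exact ⟨h2, hβ⟩
end

section
/- Let H = H(n,r,q|σ) with 2 ≤ s(σ) ≤ β and δ(σ) ≥ r - β + 1. Then the set of integers k for which H has a k-(2,β)-colouring is an interval (the spectrum is gap-free). -/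
open Finset

namespace SigmaGapfreeAux

section facts
variable {n q : ℕ} {σ : Multiset ℕ}

/-- the basic restatement: σ is the map of the intersection-card function over
the finset of classes meeting K. -/
lemma edge_eq_map (K : Finset (Fin n × Fin q)) (hK : sigmaEdge n q σ K) :
    σ = ((univ : Finset (Fin n)).filter
          (fun i => (K.filter fun v => v.1 = i).card ≠ 0)).val.map
        (fun i => (K.filter fun v => v.1 = i).card) := by
  rw [← hK, Finset.filter_val, Multiset.filter_map]
  rfl

lemma edge_card_classes (K : Finset (Fin n × Fin q)) (hK : sigmaEdge n q σ K) :
    σ.card = ((univ : Finset (Fin n)).filter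
          (fun i => (K.filter fun v => v.1 = i).card ≠ 0)).card := by
  rw [edge_eq_map K hK, Multiset.card_map]
  rfl

lemma edge_sum (K : Finset (Fin n × Fin q)) (hK : sigmaEdge n q σ K) :
    σ.sum = K.card := by
  rw [edge_eq_map K hK]
  have h1 : (((univ : Finset (Fin n)).filter
          (fun i => (K.filter fun v => v.1 = i).card ≠ 0)).val.map
        (fun i => (K.filter fun v => v.1 = i).card)).sum
      = ∑ i ∈ ((univ : Finset (Fin n)).filter
          (fun i => (K.filter fun v => v.1 = i).card ≠ 0)),
          (K.filter fun v => v.1 = i).card := rfl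
  rw [h1, Finset.sum_filter_ne_zero]
  exact (Finset.card_eq_sum_card_fiberwise (fun v _ => mem_univ v.1)).symm

lemma edge_mem_part (K : Finset (Fin n × Fin q)) (hK : sigmaEdge n q σ K) (j : Fin n)
    (hne : (K.filter fun v => v.1 = j).card ≠ 0) :
    (K.filter fun v => v.1 = j).card ∈ σ := by
  rw [edge_eq_map K hK]
  exact Multiset.mem_map_of_mem _ (Finset.mem_val.mpr (mem_filter.mpr ⟨mem_univ j, hne⟩))

lemma edge_other_class (hs2 : 2 ≤ σ.card) (K : Finset (Fin n × Fin q))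
    (hK : sigmaEdge n q σ K) (j : Fin n) : ∃ w ∈ K, w.1 ≠ j := by
  have hc := edge_card_classes K hK
  have h2 : 1 < ((univ : Finset (Fin n)).filter
          (fun i => (K.filter fun v => v.1 = i).card ≠ 0)).card := by omega
  obtain ⟨i, hi, hij⟩ := Finset.exists_mem_ne h2 j
  rw [mem_filter] at hi
  have : (K.filter fun v => v.1 = i).Nonempty := Finset.card_ne_zero.mp hi.2
  obtain ⟨w, hw⟩ := this
  rw [mem_filter] at hw
  exact ⟨w, hw.1, hw.2 ▸ hij⟩

end facts

section moves
variable {n q r β δ : ℕ} {σ : Multiset ℕ}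

/-- Move 1: merge colour `x` into colour `y`, where both occur only in class `j`. -/
lemma move1_valid (hs2 : 2 ≤ σ.card) (c : Fin n × Fin q → ℕ)
    (hc : isABColouring n q σ 2 β c) (j : Fin n) (x y : ℕ) (hxy : x ≠ y)
    (hx : ∀ v, c v = x → v.1 = j) (hy : ∀ v, c v = y → v.1 = j) :
    isABColouring n q σ 2 β (fun v => if c v = x then y else c v) := by
  intro K hK
  obtain ⟨h2, hβ⟩ := hc K hK
  have himg : (K.image fun v => if c v = x then y else c v)
      = (K.image c).image (fun t => if t = x then y else t) := by
    rw [Finset.image_image]; rfl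
  constructor
  · -- lower bound
    by_contra hlt
    push_neg at hlt
    have hle1 : ((K.image c).image (fun t => if t = x then y else t)).card ≤ 1 := by
      rw [← himg]; omega
    rw [Finset.card_le_one] at hle1
    -- every two distinct colours of K are {x,y}
    have hxyS : ∀ t ∈ K.image c, t = x ∨ t = y := by
      intro t ht
      obtain ⟨a, ha, b, hb, hab⟩ := Finset.one_lt_card.mp (by omega : 1 < (K.image c).card)
      have key : ∀ s ∈ K.image c, ∀ s' ∈ K.image c, s ≠ s' → (s = x ∧ s' = y) ∨ (s = y ∧ s' = x) := by
        intro s hs s' hs' hss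
        have hgeq := hle1 _ (Finset.mem_image_of_mem _ hs) _ (Finset.mem_image_of_mem _ hs')
        by_cases h1 : s = x <;> by_cases h2 : s' = x
        · exact absurd (h1.trans h2.symm) hss
        · simp only [if_pos h1, if_neg h2] at hgeq
          exact Or.inl ⟨h1, hgeq.symm⟩
        · simp only [if_neg h1, if_pos h2] at hgeq
          exact Or.inr ⟨hgeq, h2⟩
        · simp only [if_neg h1, if_neg h2] at hgeq
          exact absurd hgeq hss
      by_cases hta : t = a
      · subst hta; rcases key t ht b hb hab with h | h <;> tauto
      · rcases key t ht a ha hta with h | h <;> tauto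
    -- then K is contained in class j
    obtain ⟨w, hwK, hwj⟩ := edge_other_class hs2 K hK j
    rcases hxyS (c w) (Finset.mem_image_of_mem c hwK) with h | h
    · exact hwj (hx w h)
    · exact hwj (hy w h)
  · -- upper bound
    rw [himg]
    exact le_trans (Finset.card_image_le) hβ

/-- Move 2: recolour the whole class `j` with a fresh colour `f`. -/
lemma move2_valid (hpart : σ.sum = r) (hδmem : δ ∈ σ) (hδmin : ∀ x ∈ σ, δ ≤ x)
    (hδ1 : 1 ≤ δ) (hδ : r - β + 1 ≤ δ) (hs2 : 2 ≤ σ.card) (hsβ : σ.card ≤ β)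
    (c : Fin n × Fin q → ℕ) (hc : isABColouring n q σ 2 β c) (j : Fin n) (f : ℕ)
    (hf : ∀ v, c v ≠ f) :
    isABColouring n q σ 2 β (fun v => if v.1 = j then f else c v) := by
  intro K hK
  by_cases hj : ∃ v ∈ K, v.1 = j
  · obtain ⟨v₀, hv₀K, hv₀⟩ := hj
    obtain ⟨w, hwK, hwj⟩ := edge_other_class hs2 K hK j
    constructor
    · -- lower: f and c w are distinct colours in the image
      have h1 : f ∈ K.image (fun v => if v.1 = j then f else c v) := by
        refine Finset.mem_image.mpr ⟨v₀, hv₀K, by simp [hv₀]⟩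
      have h2 : c w ∈ K.image (fun v => if v.1 = j then f else c v) := by
        refine Finset.mem_image.mpr ⟨w, hwK, by simp [hwj]⟩
      exact Finset.one_lt_card.mpr ⟨f, h1, c w, h2, fun h => hf w h.symm⟩
    · -- upper
      have hsub : K.image (fun v => if v.1 = j then f else c v)
          ⊆ insert f ((K.filter (fun v => ¬ v.1 = j)).image c) := by
        intro t ht
        obtain ⟨v, hvK, rfl⟩ := Finset.mem_image.mp ht
        by_cases hvj : v.1 = j
        · simp [hvj]
        · simp only [if_neg hvj]
          exact Finset.mem_insert_of_mem
            (Finset.mem_image_of_mem c (mem_filter.mpr ⟨hvK, hvj⟩))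
      have hcard : (K.image (fun v => if v.1 = j then f else c v)).card
          ≤ (K.filter (fun v => ¬ v.1 = j)).card + 1 := by
        calc (K.image (fun v => if v.1 = j then f else c v)).card
            ≤ (insert f ((K.filter (fun v => ¬ v.1 = j)).image c)).card :=
              Finset.card_le_card hsub
          _ ≤ ((K.filter (fun v => ¬ v.1 = j)).image c).card + 1 := Finset.card_insert_le _ _
          _ ≤ (K.filter (fun v => ¬ v.1 = j)).card + 1 :=
              Nat.add_le_add_right Finset.card_image_le 1
      have hsplit : (K.filter (fun v => v.1 = j)).card + (K.filter (fun v => ¬ v.1 = j)).card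
          = K.card := Finset.card_filter_add_card_filter_not _
      have hLne : (K.filter (fun v => v.1 = j)).card ≠ 0 := by
        have : v₀ ∈ K.filter (fun v => v.1 = j) := mem_filter.mpr ⟨hv₀K, hv₀⟩
        exact Finset.card_ne_zero.mpr ⟨v₀, this⟩
      have hLmem := edge_mem_part K hK j hLne
      have hLd : δ ≤ (K.filter (fun v => v.1 = j)).card := hδmin _ hLmem
      have hr : K.card = r := by rw [← edge_sum K hK, hpart]
      have hβ2 : 2 ≤ β := le_trans hs2 hsβ
      omega
  · -- K misses class j entirely: image unchanged
    push_neg at hj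
    have : K.image (fun v => if v.1 = j then f else c v) = K.image c := by
      apply Finset.image_congr
      intro v hv
      simp [hj v hv]
    rw [this]
    exact hc K hK

end moves

section counting
variable {n q : ℕ}

def cnt (c : Fin n × Fin q → ℕ) : ℕ := ((univ : Finset (Fin n × Fin q)).image c).card

def cls (c : Fin n × Fin q → ℕ) (j : Fin n) : Finset ℕ :=
  (((univ : Finset (Fin n × Fin q))).filter (fun v => v.1 = j)).image c

def privs (c : Fin n × Fin q → ℕ) (j : Fin n) : Finset ℕ :=
  (((univ : Finset (Fin n × Fin q))).image c).filter
    (fun t => ∀ u : Fin n × Fin q, c u = t → u.1 = j)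

def mu1 (c : Fin n × Fin q → ℕ) : ℕ := ∑ j : Fin n, (cls c j).card

def mu2 (c : Fin n × Fin q → ℕ) : ℕ :=
  ((univ : Finset (Fin n × Fin n)).filter
    (fun p => p.1 ≠ p.2 ∧ (cls c p.1 ∩ cls c p.2) ≠ ∅)).card

def mu (c : Fin n × Fin q → ℕ) : ℕ := mu1 c * (n*n+1) + mu2 c

lemma mu2_le (c : Fin n × Fin q → ℕ) : mu2 c ≤ n*n := by
  have h := Finset.card_filter_le (univ : Finset (Fin n × Fin n))
    (fun p => p.1 ≠ p.2 ∧ (cls c p.1 ∩ cls c p.2) ≠ ∅)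
  simpa [mu2, Finset.card_univ] using h

lemma lexlt1 {a A b B M : ℕ} (h1 : a < A) (h2 : b ≤ M) :
    a*(M+1)+b < A*(M+1)+B := by
  have h3 : (a+1)*(M+1) ≤ A*(M+1) := Nat.mul_le_mul_right _ h1
  have h4 : (a+1)*(M+1) = a*(M+1) + (M+1) := Nat.succ_mul _ _
  have h5 : a*(M+1)+b < a*(M+1)+(M+1) := Nat.add_lt_add_left (Nat.lt_succ_of_le h2) _
  calc a*(M+1)+b < a*(M+1)+(M+1) := h5
    _ = (a+1)*(M+1) := h4.symm
    _ ≤ A*(M+1) := h3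
    _ ≤ A*(M+1)+B := Nat.le_add_right _ _

lemma cls_subset_image (c : Fin n × Fin q → ℕ) (j : Fin n) :
    cls c j ⊆ (univ : Finset (Fin n × Fin q)).image c :=
  Finset.image_subset_image (Finset.filter_subset _ _)

lemma fresh_spec (c : Fin n × Fin q → ℕ) :
    ∀ v, c v ≠ ((univ : Finset (Fin n × Fin q)).image c).sup id + 1 := by
  intro v h
  have : c v ≤ ((univ : Finset (Fin n × Fin q)).image c).sup id :=
    Finset.le_sup (f := id) (Finset.mem_image_of_mem c (mem_univ v))
  omega

end counting

section stepsec
variable {n q r β δ : ℕ} {σ : Multiset ℕ}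

lemma step (hs2 : 2 ≤ σ.card) (hsβ : σ.card ≤ β) (hsum : σ.sum = r)
    (hδmem : δ ∈ σ) (hδmin : ∀ x ∈ σ, δ ≤ x) (hδ1 : 1 ≤ δ) (hδ : r - β + 1 ≤ δ)
    (c : Fin n × Fin q → ℕ) (hc : isABColouring n q σ 2 β c)
    (hP : ¬ ∀ v w : Fin n × Fin q, c v = c w ↔ v.1 = w.1) :
    ∃ c', isABColouring n q σ 2 β c' ∧ cnt c' ≤ cnt c + 1 ∧ cnt c ≤ cnt c' + 1
      ∧ mu c' < mu c := by
  by_cases hA : ∃ v w : Fin n × Fin q, v.1 = w.1 ∧ c v ≠ c w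
  · -- some class j is not monochromatic
    obtain ⟨v, w, hvw, hne⟩ := hA
    set j := v.1 with hj
    by_cases hpr : 2 ≤ (privs c j).card
    · -- Case A1: merge two private colours of class j
      obtain ⟨x, hx, y, hy, hxy⟩ := Finset.one_lt_card.mp hpr
      rw [privs, mem_filter] at hx hy
      refine ⟨fun v => if c v = x then y else c v,
        move1_valid hs2 c hc j x y hxy hx.2 hy.2, ?_⟩
      set g : ℕ → ℕ := fun t => if t = x then y else t with hg
      have himg : ∀ (s : Finset (Fin n × Fin q)),
          s.image (fun v => if c v = x then y else c v) = (s.image c).image g := by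
        intro s; rw [Finset.image_image]; rfl
      have hyim : y ∈ (univ : Finset (Fin n × Fin q)).image c := hy.1
      have hxim : x ∈ (univ : Finset (Fin n × Fin q)).image c := hx.1
      have himgEq : ((univ : Finset (Fin n × Fin q)).image c).image g
          = ((univ : Finset (Fin n × Fin q)).image c).erase x := by
        ext t
        constructor
        · intro ht
          obtain ⟨s, hs, rfl⟩ := Finset.mem_image.mp ht
          by_cases hsx : s = x
          · rw [hg]; simp only [if_pos hsx]
            exact Finset.mem_erase.mpr ⟨(Ne.symm hxy), hyim⟩
          · rw [hg]; simp only [if_neg hsx]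
            exact Finset.mem_erase.mpr ⟨hsx, hs⟩
        · intro ht
          obtain ⟨htx, htS⟩ := Finset.mem_erase.mp ht
          exact Finset.mem_image.mpr ⟨t, htS, by rw [hg]; simp [htx]⟩
      have hxcls : x ∈ cls c j := by
        obtain ⟨u, _, hu⟩ := Finset.mem_image.mp hx.1
        exact Finset.mem_image.mpr ⟨u, mem_filter.mpr ⟨mem_univ u, hx.2 u hu⟩, hu⟩
      have hycls : y ∈ cls c j := by
        obtain ⟨u, _, hu⟩ := Finset.mem_image.mp hy.1
        exact Finset.mem_image.mpr ⟨u, mem_filter.mpr ⟨mem_univ u, hy.2 u hu⟩, hu⟩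
      have hclsAll : ∀ i, cls (fun v => if c v = x then y else c v) i = (cls c i).image g := by
        intro i; rw [cls, himg]; rfl
      constructor
      · -- cnt upper
        rw [cnt, cnt, himg, himgEq]
        have := Finset.card_erase_le (a := x) (s := (univ : Finset (Fin n × Fin q)).image c)
        omega
      constructor
      · -- cnt lower
        rw [cnt, cnt, himg, himgEq, Finset.card_erase_of_mem hxim]
        omega
      · -- measure
        have hstrict : (cls (fun v => if c v = x then y else c v) j).card < (cls c j).card := by
          rw [hclsAll]
          have hsub : (cls c j).image g ⊆ (cls c j).erase x := by
            intro t ht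
            obtain ⟨s, hs, rfl⟩ := Finset.mem_image.mp ht
            by_cases hsx : s = x
            · rw [hg]; simp only [if_pos hsx]
              exact Finset.mem_erase.mpr ⟨Ne.symm hxy, hycls⟩
            · rw [hg]; simp only [if_neg hsx]
              exact Finset.mem_erase.mpr ⟨hsx, hs⟩
          calc ((cls c j).image g).card ≤ ((cls c j).erase x).card := Finset.card_le_card hsub
            _ < (cls c j).card := by
                rw [Finset.card_erase_of_mem hxcls]
                have := Finset.card_pos.mpr ⟨x, hxcls⟩
                omega
        have hmu1 : mu1 (fun v => if c v = x then y else c v) < mu1 c := by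
          apply Finset.sum_lt_sum
          · intro i _
            rw [hclsAll]
            exact Finset.card_image_le
          · exact ⟨j, mem_univ j, hstrict⟩
        exact lexlt1 hmu1 (mu2_le _)
    · -- Case A2: recolour class j with a fresh colour
      push_neg at hpr
      set f := ((univ : Finset (Fin n × Fin q)).image c).sup id + 1 with hfdef
      have hf := fresh_spec c
      refine ⟨fun v => if v.1 = j then f else c v,
        move2_valid hsum hδmem hδmin hδ1 hδ hs2 hsβ c hc j f hf, ?_⟩
      have hup : ((univ : Finset (Fin n × Fin q)).image (fun v => if v.1 = j then f else c v))
          ⊆ insert f ((univ : Finset (Fin n × Fin q)).image c) := by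
        intro t ht
        obtain ⟨u, _, rfl⟩ := Finset.mem_image.mp ht
        by_cases huj : u.1 = j
        · simp [huj]
        · simp only [if_neg huj]
          exact Finset.mem_insert_of_mem (Finset.mem_image_of_mem c (mem_univ u))
      have hlow : ((univ : Finset (Fin n × Fin q)).image c) \ privs c j
          ⊆ ((univ : Finset (Fin n × Fin q)).image (fun v => if v.1 = j then f else c v)) := by
        intro t ht
        obtain ⟨htim, htpr⟩ := Finset.mem_sdiff.mp ht
        rw [privs, mem_filter] at htpr
        push_neg at htpr
        obtain ⟨u, hu, huj⟩ := htpr htim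
        exact Finset.mem_image.mpr ⟨u, mem_univ u, by simp [huj, hu]⟩
      constructor
      · -- cnt upper
        calc cnt (fun v => if v.1 = j then f else c v)
            ≤ (insert f ((univ : Finset (Fin n × Fin q)).image c)).card :=
              Finset.card_le_card hup
          _ ≤ cnt c + 1 := Finset.card_insert_le _ _
      constructor
      · -- cnt lower
        have h1 : cnt c ≤ (((univ : Finset (Fin n × Fin q)).image c) \ privs c j).card
            + (privs c j).card := Finset.card_le_card_sdiff_add_card
        have h2 := Finset.card_le_card hlow
        rw [cnt, cnt] at *
        omega
      · -- measure
        have hclsj : cls (fun v => if v.1 = j then f else c v) j = {f} := by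
          rw [cls]
          have hne' : ((univ : Finset (Fin n × Fin q)).filter (fun v => v.1 = j)).Nonempty :=
            ⟨v, mem_filter.mpr ⟨mem_univ v, hj.symm⟩⟩
          rw [Finset.image_congr (g := fun _ => f) (fun u hu => by
            simp only [mem_coe, mem_filter] at hu
            simp [hu.2])]
          exact Finset.image_const hne' f
        have hclsother : ∀ i, i ≠ j → cls (fun v => if v.1 = j then f else c v) i = cls c i := by
          intro i hij
          apply Finset.image_congr
          intro u hu
          simp only [mem_coe, mem_filter] at hu
          have : u.1 ≠ j := by rw [hu.2]; exact hij
          simp [this]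
        have hstrict : (cls (fun v => if v.1 = j then f else c v) j).card < (cls c j).card := by
          rw [hclsj, Finset.card_singleton]
          have h1 : c v ∈ cls c j := Finset.mem_image.mpr ⟨v, mem_filter.mpr ⟨mem_univ v, hj.symm⟩, rfl⟩
          have h2 : c w ∈ cls c j := Finset.mem_image.mpr ⟨w, mem_filter.mpr ⟨mem_univ w, hvw.symm.trans hj.symm⟩, rfl⟩
          exact Finset.one_lt_card.mpr ⟨c v, h1, c w, h2, hne⟩
        have hmu1 : mu1 (fun v => if v.1 = j then f else c v) < mu1 c := by
          apply Finset.sum_lt_sum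
          · intro i _
            by_cases hij : i = j
            · subst hij; exact le_of_lt hstrict
            · rw [hclsother i hij]
          · exact ⟨j, mem_univ j, hstrict⟩
        exact lexlt1 hmu1 (mu2_le _)
  · -- all classes monochromatic, but two different classes share a colour
    push_neg at hA
    have Hmono : ∀ v w : Fin n × Fin q, v.1 = w.1 → c v = c w := hA
    have hEx : ∃ v w : Fin n × Fin q, c v = c w ∧ v.1 ≠ w.1 := by
      by_contra hno
      push_neg at hno
      exact hP (fun v w => ⟨fun h => hno v w h, Hmono v w⟩)
    obtain ⟨v, w, hcvw, hvw⟩ := hEx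
    set j := v.1 with hj
    set f := ((univ : Finset (Fin n × Fin q)).image c).sup id + 1 with hfdef
    have hf := fresh_spec c
    refine ⟨fun v => if v.1 = j then f else c v,
      move2_valid hsum hδmem hδmin hδ1 hδ hs2 hsβ c hc j f hf, ?_⟩
    have hprempty : privs c j = ∅ := by
      rw [Finset.eq_empty_iff_forall_notMem]
      intro t ht
      rw [privs, mem_filter] at ht
      obtain ⟨htim, htpriv⟩ := ht
      obtain ⟨u, _, hu⟩ := Finset.mem_image.mp htim
      have huj : u.1 = j := htpriv u hu
      have hcu : c u = c v := Hmono u v (by rw [huj, hj])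
      have hwt : c w = t := by rw [← hcvw, ← hcu, hu]
      have hwj : w.1 = j := htpriv w hwt
      exact hvw (hj.symm.trans hwj.symm)
    have hup : ((univ : Finset (Fin n × Fin q)).image (fun v => if v.1 = j then f else c v))
        ⊆ insert f ((univ : Finset (Fin n × Fin q)).image c) := by
      intro t ht
      obtain ⟨u, _, rfl⟩ := Finset.mem_image.mp ht
      by_cases huj : u.1 = j
      · simp [huj]
      · simp only [if_neg huj]
        exact Finset.mem_insert_of_mem (Finset.mem_image_of_mem c (mem_univ u))
    have hlow : ((univ : Finset (Fin n × Fin q)).image c)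
        ⊆ ((univ : Finset (Fin n × Fin q)).image (fun v => if v.1 = j then f else c v)) := by
      intro t ht
      have ht' : t ∈ ((univ : Finset (Fin n × Fin q)).image c) \ privs c j := by
        rw [hprempty, Finset.sdiff_empty]; exact ht
      obtain ⟨htim, htpr⟩ := Finset.mem_sdiff.mp ht'
      rw [privs, mem_filter] at htpr
      push_neg at htpr
      obtain ⟨u, hu, huj⟩ := htpr htim
      exact Finset.mem_image.mpr ⟨u, mem_univ u, by simp [huj, hu]⟩
    constructor
    · calc cnt (fun v => if v.1 = j then f else c v)
          ≤ (insert f ((univ : Finset (Fin n × Fin q)).image c)).card :=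
            Finset.card_le_card hup
        _ ≤ cnt c + 1 := Finset.card_insert_le _ _
    constructor
    · have h2 := Finset.card_le_card hlow
      rw [cnt, cnt]
      omega
    · -- measure : mu1 equal, mu2 strictly decreases
      have hclsj : cls (fun v => if v.1 = j then f else c v) j = {f} := by
        rw [cls]
        have hne' : ((univ : Finset (Fin n × Fin q)).filter (fun v => v.1 = j)).Nonempty :=
          ⟨v, mem_filter.mpr ⟨mem_univ v, hj.symm⟩⟩
        rw [Finset.image_congr (g := fun _ => f) (fun u hu => by
          simp only [mem_coe, mem_filter] at hu
          simp [hu.2])]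
        exact Finset.image_const hne' f
      have hclsother : ∀ i, i ≠ j → cls (fun v => if v.1 = j then f else c v) i = cls c i := by
        intro i hij
        apply Finset.image_congr
        intro u hu
        simp only [mem_coe, mem_filter] at hu
        have : u.1 ≠ j := by rw [hu.2]; exact hij
        simp [this]
      have hclsjold : cls c j = {c v} := by
        apply Finset.eq_singleton_iff_unique_mem.mpr
        constructor
        · exact Finset.mem_image.mpr ⟨v, mem_filter.mpr ⟨mem_univ v, hj.symm⟩, rfl⟩
        · intro t ht
          obtain ⟨u, hu, rfl⟩ := Finset.mem_image.mp ht
          rw [mem_filter] at hu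
          exact Hmono u v (hu.2.trans hj)
      have hmu1eq : mu1 (fun v => if v.1 = j then f else c v) = mu1 c := by
        apply Finset.sum_congr rfl
        intro i _
        by_cases hij : i = j
        · subst hij; rw [hclsj, hclsjold, Finset.card_singleton, Finset.card_singleton]
        · rw [hclsother i hij]
      have hcvj : c v ∈ cls c j :=
        Finset.mem_image.mpr ⟨v, mem_filter.mpr ⟨mem_univ v, hj.symm⟩, rfl⟩
      have hcvw1 : c v ∈ cls c w.1 :=
        Finset.mem_image.mpr ⟨w, mem_filter.mpr ⟨mem_univ w, rfl⟩, hcvw.symm⟩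
      have hmem : ((j, w.1) : Fin n × Fin n) ∈ (univ : Finset (Fin n × Fin n)).filter
          (fun p => p.1 ≠ p.2 ∧ (cls c p.1 ∩ cls c p.2) ≠ ∅) := by
        refine mem_filter.mpr ⟨mem_univ _, ⟨?_, ?_⟩⟩
        · intro h; exact hvw (hj.symm.trans h)
        · exact Finset.ne_empty_of_mem (Finset.mem_inter.mpr ⟨hcvj, hcvw1⟩)
      have hsub2 : ((univ : Finset (Fin n × Fin n)).filter
            (fun p => p.1 ≠ p.2 ∧ (cls (fun v => if v.1 = j then f else c v) p.1
              ∩ cls (fun v => if v.1 = j then f else c v) p.2) ≠ ∅))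
          ⊆ ((univ : Finset (Fin n × Fin n)).filter
            (fun p => p.1 ≠ p.2 ∧ (cls c p.1 ∩ cls c p.2) ≠ ∅)).erase (j, w.1) := by
        intro p hp
        rw [mem_filter] at hp
        obtain ⟨_, hp12, hpint⟩ := hp
        have hnotj : ∀ i2 : Fin n, i2 ≠ j →
            (cls (fun v => if v.1 = j then f else c v) j
              ∩ cls (fun v => if v.1 = j then f else c v) i2) = ∅ := by
          intro i2 hi2
          rw [hclsj, hclsother i2 hi2]
          rw [Finset.eq_empty_iff_forall_notMem]
          intro t ht
          obtain ⟨ht1, ht2⟩ := Finset.mem_inter.mp ht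
          rw [Finset.mem_singleton] at ht1
          subst ht1
          obtain ⟨u, _, hu⟩ := Finset.mem_image.mp (cls_subset_image c i2 ht2)
          exact hf u hu
        have hp1 : p.1 ≠ j := by
          intro h
          have hp2j : p.2 ≠ j := by rw [← h]; exact fun hh => hp12 hh.symm
          exact hpint (by rw [h]; exact hnotj p.2 hp2j)
        have hp2 : p.2 ≠ j := by
          intro h
          apply hpint
          rw [Finset.inter_comm, h]
          exact hnotj p.1 hp1
        refine Finset.mem_erase.mpr ⟨?_, ?_⟩
        · intro h
          exact hp1 (by rw [h])
        · refine mem_filter.mpr ⟨mem_univ _, hp12, ?_⟩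
          rw [← hclsother p.1 hp1, ← hclsother p.2 hp2]
          exact hpint
      have hmu2 : mu2 (fun v => if v.1 = j then f else c v) < mu2 c := by
        rw [mu2, mu2]
        calc _ ≤ (((univ : Finset (Fin n × Fin n)).filter
              (fun p => p.1 ≠ p.2 ∧ (cls c p.1 ∩ cls c p.2) ≠ ∅)).erase (j, w.1)).card :=
            Finset.card_le_card hsub2
          _ < _ := by
            rw [Finset.card_erase_of_mem hmem]
            have := Finset.card_pos.mpr ⟨_, hmem⟩
            omega
      rw [mu, mu, hmu1eq]
      exact Nat.add_lt_add_left hmu2 _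

end stepsec

section reachsec
variable {n q r β δ : ℕ} {σ : Multiset ℕ}

lemma cnt_of_P (hq : 1 ≤ q) (c : Fin n × Fin q → ℕ)
    (hP : ∀ v w : Fin n × Fin q, c v = c w ↔ v.1 = w.1) : cnt c = n := by
  have hinj : Function.Injective (fun j : Fin n => c (j, ⟨0, hq⟩)) :=
    fun i j h => (hP _ _).mp h
  have himg : (univ : Finset (Fin n × Fin q)).image c
      = (univ : Finset (Fin n)).image (fun j => c (j, ⟨0, hq⟩)) := by
    ext t
    simp only [Finset.mem_image]
    constructor
    · rintro ⟨v, _, rfl⟩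
      exact ⟨v.1, mem_univ _, (hP (v.1, ⟨0, hq⟩) v).mpr rfl⟩
    · rintro ⟨j, _, rfl⟩
      exact ⟨(j, ⟨0, hq⟩), mem_univ _, rfl⟩
  rw [cnt, himg, Finset.card_image_of_injective _ hinj, card_univ, Fintype.card_fin]

lemma reach (hs2 : 2 ≤ σ.card) (hsβ : σ.card ≤ β) (hsum : σ.sum = r)
    (hδmem : δ ∈ σ) (hδmin : ∀ x ∈ σ, δ ≤ x) (hδ1 : 1 ≤ δ) (hδ : r - β + 1 ≤ δ)
    (hq : 1 ≤ q) :
    ∀ N (c : Fin n × Fin q → ℕ), mu c ≤ N → isABColouring n q σ 2 β c →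
      ∀ m, ((cnt c ≤ m ∧ m ≤ n) ∨ (n ≤ m ∧ m ≤ cnt c)) →
      ∃ d, isABColouring n q σ 2 β d ∧ cnt d = m := by
  intro N
  induction N with
  | zero =>
    intro c hmu hc m hm
    by_cases hcm : cnt c = m
    · exact ⟨c, hc, hcm⟩
    by_cases hP : ∀ v w : Fin n × Fin q, c v = c w ↔ v.1 = w.1
    · exfalso
      have := cnt_of_P hq c hP
      omega
    · obtain ⟨c', hc', h1, h2, hlt⟩ := step hs2 hsβ hsum hδmem hδmin hδ1 hδ c hc hP
      exact absurd hlt (by omega)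
  | succ N ih =>
    intro c hmu hc m hm
    by_cases hcm : cnt c = m
    · exact ⟨c, hc, hcm⟩
    by_cases hP : ∀ v w : Fin n × Fin q, c v = c w ↔ v.1 = w.1
    · exfalso
      have := cnt_of_P hq c hP
      omega
    · obtain ⟨c', hc', h1, h2, hlt⟩ := step hs2 hsβ hsum hδmem hδmin hδ1 hδ c hc hP
      exact ih c' (by omega) hc' m (by omega)

end reachsec

end SigmaGapfreeAux

theorem stmt16 (n r q β δ : ℕ) (σ : Multiset ℕ)
    (hpart : IsPartitionOf σ r)
    (hδmem : δ ∈ σ) (hδmin : ∀ x ∈ σ, δ ≤ x)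
    (hδ : r - β + 1 ≤ δ) (hs2 : 2 ≤ σ.card) (hsβ : σ.card ≤ β) :
    ∀ k₁ k₂ k : ℕ,
      (∃ c : Fin n × Fin q → ℕ, isABColouring n q σ 2 β c ∧ usesExactly n q k₁ c) →
      (∃ c : Fin n × Fin q → ℕ, isABColouring n q σ 2 β c ∧ usesExactly n q k₂ c) →
      k₁ ≤ k → k ≤ k₂ →
      ∃ c : Fin n × Fin q → ℕ, isABColouring n q σ 2 β c ∧ usesExactly n q k c := by
  intro k₁ k₂ k h1 h2 hk1 hk2
  obtain ⟨c₁, hc₁, hu₁⟩ := h1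
  obtain ⟨c₂, hc₂, hu₂⟩ := h2
  have hδ1 : 1 ≤ δ :=
    Nat.one_le_iff_ne_zero.mpr (fun h => hpart.2 (h ▸ hδmem))
  by_cases hq : 1 ≤ q
  · by_cases hkn : k ≤ n
    · obtain ⟨d, hd, hdc⟩ := SigmaGapfreeAux.reach hs2 hsβ hpart.1 hδmem hδmin hδ1 hδ hq
        (SigmaGapfreeAux.mu c₁) c₁ le_rfl hc₁ k
        (Or.inl ⟨by rw [SigmaGapfreeAux.cnt, hu₁]; exact hk1, hkn⟩)
      exact ⟨d, hd, hdc⟩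
    · obtain ⟨d, hd, hdc⟩ := SigmaGapfreeAux.reach hs2 hsβ hpart.1 hδmem hδmin hδ1 hδ hq
        (SigmaGapfreeAux.mu c₂) c₂ le_rfl hc₂ k
        (Or.inr ⟨by omega, by rw [SigmaGapfreeAux.cnt, hu₂]; exact hk2⟩)
      exact ⟨d, hd, hdc⟩
  · -- q = 0 : there are no vertices at all
    have hq0 : q = 0 := by omega
    subst hq0
    have huniv : (univ : Finset (Fin n × Fin 0)) = ∅ := by
      ext v
      exact v.2.elim0
    have h0 : ∀ c : Fin n × Fin 0 → ℕ, ((univ : Finset (Fin n × Fin 0)).image c).card = 0 := by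
      intro c
      rw [huniv, Finset.image_empty, Finset.card_empty]
    have hk10 : k₁ = 0 := by rw [usesExactly, h0] at hu₁; omega
    have hk20 : k₂ = 0 := by rw [usesExactly, h0] at hu₂; omega
    have hk0 : k = 0 := by omega
    exact ⟨c₁, hc₁, by rw [usesExactly, h0, hk0]⟩
end
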